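/- arXiv:2103.03952 — 4 statements merged into one kernel-verified Lean document; each statement's English description precedes it below -/
import Mathlib

section
/- Every 4-conic simplicial complex is simply connected, i.e., its geometric realization is path-connected with trivial fundamental group. -/
/-!
Fix a vertex `c`. Every vertex `u` receives the class `φ u` of an edge path `c → z → u`; any two
such paths form a 4-cycle, which 4-conicity puts in the closed star of a cone vertex, where all
paths with the same endpoints are homotopic (the star is star-convex). Coning off the 3-edge path
`c → z → a → b` in the same way shows `φ a · [ab] = φ b` for every edge `ab`. Extending by straight
segments gives classes `ψ x` of paths from `c` to every point `x` with `ψ y · [γ] = ψ z` for every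
path `γ` inside a closed star. Since `[0, 1]` is connected this holds for every path `γ`, so any
two paths with the same endpoints are homotopic.
-/

open Finset
open scoped Classical

/-- An abstract simplicial complex on vertex type `V`: a downward-closed family of
nonempty finite subsets of `V`. -/
structure SComplex (V : Type*) where
  faces : Set (Finset V)
  not_empty_mem : ∅ ∉ faces
  down_closed : ∀ {s t : Finset V}, s ∈ faces → t ⊆ s → t.Nonempty → t ∈ faces

namespace SComplex

variable {V W : Type*}

/-- The vertex set of a simplicial complex. -/
def vertexSet (K : SComplex V) : Set V := {v | {v} ∈ K.faces}

/-- The geometric realization of a simplicial complex, as the set of convex-combination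
coordinate functions supported on a simplex. -/
def realization (K : SComplex V) : Set (V → ℝ) :=
  {x | ∃ σ ∈ K.faces, (∀ v, 0 ≤ x v) ∧ (∀ v, v ∉ σ → x v = 0) ∧ (∑ v ∈ σ, x v) = 1}

/-- The geometric realization as a topological space. -/
abbrev space (K : SComplex V) : Type _ := ↥(K.realization)

/-- `L` is a subcomplex of `K`. -/
def IsSubcomplex (L K : SComplex V) : Prop := L.faces ⊆ K.faces

/-- A complex is `r`-conic (`r` an integer, possibly `-1`) if every subcomplex with at
most `r` vertices is contained in the closed star of some vertex. -/
def IsConic (K : SComplex V) (r : ℤ) : Prop :=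
  ∀ L : SComplex V, L.IsSubcomplex K → L.vertexSet.Finite →
    (L.vertexSet.ncard : ℤ) ≤ r →
    ∃ v ∈ K.vertexSet, ∀ σ ∈ L.faces, insert v σ ∈ K.faces

/-- The link of a vertex `v` in `K`. -/
def vertexLink (K : SComplex V) (v : V) : Set (Finset V) :=
  {τ ∈ K.faces | v ∉ τ ∧ insert v τ ∈ K.faces}

/-- A nonempty complex is `r`-ample if for every set `U` of at most `r` vertices and
every subcomplex `L` with vertices in `U`, some vertex `v` has a link whose simplices
contained in `U` are exactly those of `L`. -/
def IsAmple (K : SComplex V) (r : ℕ) : Prop :=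
  K.faces.Nonempty ∧
  ∀ U : Finset V, ↑U ⊆ K.vertexSet → U.card ≤ r →
    ∀ L : SComplex V, L.IsSubcomplex K → L.vertexSet ⊆ ↑U →
      ∃ v ∈ K.vertexSet, {τ ∈ K.vertexLink v | ↑τ ⊆ (U : Set V)} = L.faces

end SComplex

/-- A topological space is `n`-connected if it is nonempty and every continuous map
from the `k`-sphere, `0 ≤ k ≤ n`, is null-homotopic. -/
def NConnected (n : ℕ) (X : Type*) [TopologicalSpace X] : Prop :=
  Nonempty X ∧ ∀ k : ℕ, k ≤ n →
    ∀ f : C(Metric.sphere (0 : EuclideanSpace ℝ (Fin (k + 1))) 1, X),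
      f.Nullhomotopic

noncomputable section

open Set
open scoped Convex Topology

namespace Path.Homotopic.Quotient

variable {X : Type*} [TopologicalSpace X] {b : X}

theorem eq_of_trans_eq {x y : X} (β : Path.Homotopic.Quotient b x)
    {p q : Path.Homotopic.Quotient x y} (h : β.trans p = β.trans q) : p = q := by
  simpa [← trans_assoc] using congrArg (β.symm.trans ·) h

theorem trans_mk_eq_of_local (ψ : ∀ x : X, Path.Homotopic.Quotient b x)
    (hψ : ∀ x, ∃ U ∈ 𝓝 x, ∀ ⦃y z⦄ (γ : Path y z), Set.range γ ⊆ U → (ψ y).trans (mk γ) = ψ z)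
    ⦃x y : X⦄ (γ : Path x y) : (ψ x).trans (mk γ) = ψ y := by
  let P : unitInterval → unitInterval → Prop :=
    fun s t => (ψ (γ s)).trans (mk (γ.subpath s t)) = ψ (γ t)
  have hP : P 0 1 := by
    refine PreconnectedSpace.induction₂' P (fun s => ?_) ⟨fun r s t hrs hst => ?_⟩ 0 1
    · obtain ⟨U, hU, hψU⟩ := hψ (γ s)
      have hnhds : ordConnectedComponent (γ ⁻¹' U) s ∈ 𝓝 s :=
        ordConnectedComponent_mem_nhds.2 (γ.continuous.continuousAt hU)
      filter_upwards [hnhds] with t ht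
      rw [mem_ordConnectedComponent, ← image_subset_iff] at ht
      exact ⟨hψU _ (by rwa [Path.range_subpath]),
        hψU _ (by rwa [Path.range_subpath, Set.uIcc_comm])⟩
    · simp only [P] at hrs hst ⊢
      rw [← hst, ← hrs, trans_assoc, ← mk_trans,
        eq.2 ⟨Path.Homotopy.subpathTransSubpath γ r s t⟩]
  have hcast : ∀ {x' y'} (hx : x' = x) (hy : y' = y),
      (ψ x').trans ((mk γ).cast hx hy) = ψ y' → (ψ x).trans (mk γ) = ψ y := by
    rintro _ _ rfl rfl h
    exact h
  exact hcast _ _ (by simpa [P] using hP)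

end Path.Homotopic.Quotient

open Path.Homotopic.Quotient in
theorem simplyConnectedSpace_of_trans_mk_eq {X : Type*} [TopologicalSpace X] {b : X}
    (ψ : ∀ x : X, Path.Homotopic.Quotient b x)
    (hψ : ∀ ⦃x y⦄ (γ : Path x y), (ψ x).trans (mk γ) = ψ y) : SimplyConnectedSpace X := by
  have hjoined : ∀ x, Joined b x := fun x => ⟨Quotient.out (ψ x)⟩
  refine simply_connected_iff_paths_homotopic.2
    ⟨⟨⟨b⟩, fun x y => (hjoined x).symm.trans (hjoined y)⟩, fun x y => ⟨fun p q => ?_⟩⟩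
  induction p using Path.Homotopic.Quotient.ind with | mk p =>
  induction q using Path.Homotopic.Quotient.ind with | mk q =>
  exact eq_of_trans_eq (ψ x) ((hψ p).trans (hψ q).symm)

section StarConvex

variable {E : Type*} [AddCommGroup E] [Module ℝ E] [TopologicalSpace E] [ContinuousAdd E]
  [ContinuousSMul ℝ E]

def Path.segmentIn {T : Set E} {x y : T} (h : [(x : E) -[ℝ] y] ⊆ T) : Path x y where
  toFun t := ⟨Path.segment (x : E) y t, h (Path.range_segment (x : E) y ▸ mem_range_self t)⟩
  continuous_toFun := (Path.segment (x : E) y).continuous.subtype_mk _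
  source' := by ext; simp
  target' := by ext; simp

theorem Path.range_segmentIn_subset {T : Set E} {x y : T} (h : [(x : E) -[ℝ] y] ⊆ T) :
    Set.range (Path.segmentIn h) ⊆ Subtype.val ⁻¹' [(x : E) -[ℝ] y] := by
  rintro _ ⟨t, rfl⟩
  exact Path.range_segment (x : E) y ▸ mem_range_self t

theorem Path.Homotopic.of_range_subset_starConvex {T S : Set E} {c : E} (hS : StarConvex ℝ c S)
    (hST : S ⊆ T) {x y : T} {p q : Path x y} (hp : Set.range p ⊆ Subtype.val ⁻¹' S)
    (hq : Set.range q ⊆ Subtype.val ⁻¹' S) : p.Homotopic q := by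
  have hx : (x : E) ∈ S := hp ⟨0, p.source⟩
  have hy : (y : E) ∈ S := hp ⟨1, p.target⟩
  have := hS.contractibleSpace ⟨x, hx⟩
  let ι : C(S, T) := ⟨fun z => ⟨z, hST z.2⟩, by fun_prop⟩
  let lift (r : Path x y) (hr : Set.range r ⊆ Subtype.val ⁻¹' S) : Path (⟨x, hx⟩ : S) ⟨y, hy⟩ :=
    { toFun t := ⟨r t, hr (mem_range_self t)⟩
      source' := by simp
      target' := by simp }
  have hlift : ∀ r hr, (lift r hr).map ι.continuous = r := fun r hr => by ext; rfl
  rw [← hlift p hp, ← hlift q hq]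
  exact (SimplyConnectedSpace.paths_homotopic _ _).map ι

end StarConvex

namespace SComplex

variable {V : Type*}

def closedSimplex (σ : Finset V) : Set (V → ℝ) :=
  {x | (∀ v, 0 ≤ x v) ∧ (∀ v, v ∉ σ → x v = 0) ∧ ∑ v ∈ σ, x v = 1}

theorem convex_closedSimplex (σ : Finset V) : Convex ℝ (closedSimplex σ) := by
  rintro x ⟨hx0, hxσ, hx1⟩ y ⟨hy0, hyσ, hy1⟩ a b ha hb hab
  refine ⟨fun v => ?_, fun v hv => ?_, ?_⟩
  · have := hx0 v
    have := hy0 v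
    simp only [Pi.add_apply, Pi.smul_apply, smul_eq_mul]
    positivity
  · simp [hxσ v hv, hyσ v hv]
  · simp [Finset.sum_add_distrib, ← Finset.mul_sum, hx1, hy1, hab]

theorem single_mem_closedSimplex {σ : Finset V} {v : V} (hv : v ∈ σ) :
    Pi.single v 1 ∈ closedSimplex σ := by
  refine ⟨fun w => ?_, fun w hw => ?_, by simp [hv]⟩
  · by_cases h : w = v <;> simp [h]
  · simp [show w ≠ v by rintro rfl; exact hw hv]

theorem mem_of_mem_closedSimplex_of_pos {σ : Finset V} {x : V → ℝ} {v : V}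
    (hx : x ∈ closedSimplex σ) (hv : 0 < x v) : v ∈ σ := by
  by_contra h
  exact hv.ne' (hx.2.1 v h)

theorem mem_vertexSet_left {K : SComplex V} {a b : V} (h : ({a, b} : Finset V) ∈ K.faces) :
    a ∈ K.vertexSet :=
  K.down_closed h (by simp) (by simp)

theorem mem_vertexSet_right {K : SComplex V} {a b : V} (h : ({a, b} : Finset V) ∈ K.faces) :
    b ∈ K.vertexSet :=
  K.down_closed h (by simp) (by simp)

def generate (S : Set (Finset V)) : SComplex V where
  faces := {τ | τ.Nonempty ∧ ∃ σ ∈ S, τ ⊆ σ}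
  not_empty_mem h := Finset.not_nonempty_empty h.1
  down_closed := fun ⟨_, σ, hσ, hsσ⟩ hts hne => ⟨hne, σ, hσ, hts.trans hsσ⟩

theorem IsConic.exists_cone {K : SComplex V} {r : ℤ} (hK : K.IsConic r) {S : Set (Finset V)}
    (hS : S ⊆ K.faces) (U : Finset V) (hSU : ∀ σ ∈ S, σ ⊆ U) (hU : (U.card : ℤ) ≤ r) :
    ∃ w ∈ K.vertexSet, ∀ σ ∈ S, insert w σ ∈ K.faces := by
  have hvert : (generate S).vertexSet ⊆ U := fun v ⟨_, σ, hσ, hvσ⟩ =>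
    hSU σ hσ (hvσ (Finset.mem_singleton_self v))
  have hcard : ((generate S).vertexSet.ncard : ℤ) ≤ r := by
    have := Set.ncard_le_ncard hvert U.finite_toSet
    rw [Set.ncard_coe_finset] at this
    omega
  obtain ⟨w, hw, hcone⟩ := hK (generate S)
    (fun τ ⟨hne, σ, hσ, hτσ⟩ => K.down_closed (hS hσ) hτσ hne) (U.finite_toSet.subset hvert) hcard
  refine ⟨w, hw, fun σ hσ => ?_⟩
  rcases σ.eq_empty_or_nonempty with rfl | hne
  · exact hw
  · exact hcone σ ⟨hne, σ, hσ, subset_rfl⟩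

variable (K : SComplex V)

def closedStar (v : V) : Set (V → ℝ) :=
  {x | ∃ σ ∈ K.faces, v ∈ σ ∧ x ∈ closedSimplex σ}

def vertex {v : V} (hv : v ∈ K.vertexSet) : K.space :=
  ⟨Pi.single v 1, {v}, hv, single_mem_closedSimplex (Finset.mem_singleton_self v)⟩

variable {K}

theorem closedSimplex_subset_closedStar {σ : Finset V} {v : V} (hσ : σ ∈ K.faces) (hv : v ∈ σ) :
    closedSimplex σ ⊆ K.closedStar v :=
  fun _ hx => ⟨σ, hσ, hv, hx⟩

theorem closedStar_subset_realization (v : V) : K.closedStar v ⊆ K.realization :=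
  fun _ ⟨σ, hσ, _, hx⟩ => ⟨σ, hσ, hx⟩

theorem starConvex_closedStar (v : V) : StarConvex ℝ (Pi.single v 1) (K.closedStar v) := by
  rintro x ⟨σ, hσ, hv, hx⟩ a b ha hb hab
  exact ⟨σ, hσ, hv, convex_closedSimplex σ (single_mem_closedSimplex hv) hx ha hb hab⟩

theorem mem_vertexSet_of_mem_closedStar {v : V} {x : V → ℝ} (hx : x ∈ K.closedStar v) :
    v ∈ K.vertexSet := by
  obtain ⟨σ, hσ, hv, -⟩ := hx
  exact K.down_closed hσ (Finset.singleton_subset_iff.2 hv) (Finset.singleton_nonempty v)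

theorem exists_coord_pos (x : K.space) : ∃ v, 0 < x.1 v := by
  obtain ⟨σ, -, -, -, hx1⟩ := x.2
  obtain ⟨v, -, hv⟩ := Finset.exists_lt_of_sum_lt (f := 0) (s := σ) (by rw [hx1]; simp)
  exact ⟨v, hv⟩

theorem mem_closedStar_of_pos {x : K.space} {v : V} (hv : 0 < x.1 v) : x.1 ∈ K.closedStar v := by
  obtain ⟨σ, hσ, hx⟩ := x.2
  exact ⟨σ, hσ, mem_of_mem_closedSimplex_of_pos hx hv, hx⟩

theorem homotopic_of_range_subset_closedStar {v : V} {x y : K.space} {p q : Path x y}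
    (hp : Set.range p ⊆ Subtype.val ⁻¹' K.closedStar v)
    (hq : Set.range q ⊆ Subtype.val ⁻¹' K.closedStar v) : p.Homotopic q :=
  Path.Homotopic.of_range_subset_starConvex (starConvex_closedStar v)
    (closedStar_subset_realization v) hp hq

variable (K)

def starSegment {v : V} {x : K.space} (hx : x.1 ∈ K.closedStar v) :
    Path (K.vertex (mem_vertexSet_of_mem_closedStar hx)) x :=
  Path.segmentIn (((starConvex_closedStar v).segment_subset hx).trans
    (closedStar_subset_realization v))

def edge {a b : V} (h : ({a, b} : Finset V) ∈ K.faces) :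
    Path (K.vertex (mem_vertexSet_left h)) (K.vertex (mem_vertexSet_right h)) :=
  K.starSegment (x := K.vertex (mem_vertexSet_right h))
    ⟨{a, b}, h, by simp, single_mem_closedSimplex (by simp)⟩

def IsEdgeCompatible {x : K.space}
    (φ : ∀ ⦃u⦄ (hu : u ∈ K.vertexSet), Path.Homotopic.Quotient x (K.vertex hu)) : Prop :=
  ∀ ⦃a b⦄ (h : ({a, b} : Finset V) ∈ K.faces),
    (φ (mem_vertexSet_left h)).trans (.mk (K.edge h)) = φ (mem_vertexSet_right h)

variable {K}

theorem range_starSegment_subset {v w : V} {x : K.space} (hx : x.1 ∈ K.closedStar v)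
    {τ : Finset V} (hτ : τ ∈ K.faces) (hvτ : v ∈ τ) (hwτ : w ∈ τ) (hxτ : x.1 ∈ closedSimplex τ) :
    Set.range (K.starSegment hx) ⊆ Subtype.val ⁻¹' K.closedStar w :=
  (Path.range_segmentIn_subset _).trans <| preimage_mono <|
    ((convex_closedSimplex τ).segment_subset (single_mem_closedSimplex hvτ) hxτ).trans
      (closedSimplex_subset_closedStar hτ hwτ)

theorem range_starSegment_subset_self {v : V} {x : K.space} (hx : x.1 ∈ K.closedStar v) :
    Set.range (K.starSegment hx) ⊆ Subtype.val ⁻¹' K.closedStar v :=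
  let ⟨_, hτ, hvτ, hxτ⟩ := hx
  range_starSegment_subset hx hτ hvτ hvτ hxτ

theorem range_edge_subset {a b w : V} (h : ({a, b} : Finset V) ∈ K.faces) {τ : Finset V}
    (hτ : τ ∈ K.faces) (habτ : {a, b} ⊆ τ) (hwτ : w ∈ τ) :
    Set.range (K.edge h) ⊆ Subtype.val ⁻¹' K.closedStar w :=
  range_starSegment_subset _ hτ (habτ (by simp)) hwτ (single_mem_closedSimplex (habτ (by simp)))

open Path.Homotopic.Quotient (mk_trans trans_assoc)

theorem edge_trans_edge_homotopic (hK : K.IsConic 4) {c z z' a : V}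
    (h₁ : ({c, z} : Finset V) ∈ K.faces) (h₂ : ({z, a} : Finset V) ∈ K.faces)
    (h₃ : ({c, z'} : Finset V) ∈ K.faces) (h₄ : ({z', a} : Finset V) ∈ K.faces) :
    ((K.edge h₁).trans (K.edge h₂)).Homotopic ((K.edge h₃).trans (K.edge h₄)) := by
  obtain ⟨w, -, hw⟩ := hK.exists_cone (S := {{c, z}, {z, a}, {c, z'}, {z', a}})
    (by simp [insert_subset_iff, h₁, h₂, h₃, h₄]) {c, z, a, z'}
    (by simp [Finset.subset_iff, or_imp, forall_and]) (by exact_mod_cast Finset.card_le_four)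
  simp only [mem_insert_iff, mem_singleton_iff, forall_eq_or_imp, forall_eq] at hw
  obtain ⟨hw₁, hw₂, hw₃, hw₄⟩ := hw
  refine homotopic_of_range_subset_closedStar (v := w) ?_ ?_ <;> rw [Path.trans_range]
  · exact union_subset (range_edge_subset _ hw₁ (Finset.subset_insert _ _) (by simp))
      (range_edge_subset _ hw₂ (Finset.subset_insert _ _) (by simp))
  · exact union_subset (range_edge_subset _ hw₃ (Finset.subset_insert _ _) (by simp))
      (range_edge_subset _ hw₄ (Finset.subset_insert _ _) (by simp))

theorem exists_edge_trans_edge_homotopic (hK : K.IsConic 4) {c z a b : V}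
    (h₁ : ({c, z} : Finset V) ∈ K.faces) (h₂ : ({z, a} : Finset V) ∈ K.faces)
    (h₃ : ({a, b} : Finset V) ∈ K.faces) :
    ∃ w, ∃ (h₁' : ({c, w} : Finset V) ∈ K.faces) (h₂' : ({w, b} : Finset V) ∈ K.faces),
      (((K.edge h₁).trans (K.edge h₂)).trans (K.edge h₃)).Homotopic
        ((K.edge h₁').trans (K.edge h₂')) := by
  obtain ⟨w, -, hw⟩ := hK.exists_cone (S := {{c, z}, {z, a}, {a, b}})
    (by simp [insert_subset_iff, h₁, h₂, h₃]) {c, z, a, b}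
    (by simp [Finset.subset_iff, or_imp, forall_and]) (by exact_mod_cast Finset.card_le_four)
  simp only [mem_insert_iff, mem_singleton_iff, forall_eq_or_imp, forall_eq] at hw
  obtain ⟨hw₁, hw₂, hw₃⟩ := hw
  have hcw : ({c, w} : Finset V) ⊆ insert w {c, z} := by simp [Finset.insert_subset_iff]
  have hwb : ({w, b} : Finset V) ⊆ insert w {a, b} := by simp [Finset.insert_subset_iff]
  refine ⟨w, K.down_closed hw₁ hcw (by simp), K.down_closed hw₃ hwb (by simp), ?_⟩
  refine homotopic_of_range_subset_closedStar (v := w) ?_ ?_ <;>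
    simp only [Path.trans_range, union_subset_iff]
  · exact ⟨⟨range_edge_subset _ hw₁ (Finset.subset_insert _ _) (by simp),
      range_edge_subset _ hw₂ (Finset.subset_insert _ _) (by simp)⟩,
      range_edge_subset _ hw₃ (Finset.subset_insert _ _) (by simp)⟩
  · exact ⟨range_edge_subset _ hw₁ hcw (by simp), range_edge_subset _ hw₃ hwb (by simp)⟩

theorem exists_isEdgeCompatible (hK : K.IsConic 4) {c : V} (hc : c ∈ K.vertexSet) :
    ∃ φ : ∀ ⦃u⦄ (hu : u ∈ K.vertexSet), Path.Homotopic.Quotient (K.vertex hc) (K.vertex hu),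
      K.IsEdgeCompatible φ := by
  have hbridge : ∀ u ∈ K.vertexSet, ∃ z, ∃ (_ : ({c, z} : Finset V) ∈ K.faces),
      ({z, u} : Finset V) ∈ K.faces := by
    intro u hu
    obtain ⟨z, -, hz⟩ := hK.exists_cone (S := {{c}, {u}})
      (insert_subset_iff.2 ⟨hc, singleton_subset_iff.2 hu⟩) {c, u} (by simp)
      (by have := Finset.card_le_two (a := c) (b := u); omega)
    simp only [mem_insert_iff, mem_singleton_iff, forall_eq_or_imp, forall_eq] at hz
    exact ⟨z, Finset.pair_comm z c ▸ hz.1, hz.2⟩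
  choose z hcz hzu using hbridge
  refine ⟨fun u hu => .mk ((K.edge (hcz u hu)).trans (K.edge (hzu u hu))), fun a b h => ?_⟩
  obtain ⟨w, hcw, hwb, hhom⟩ := exists_edge_trans_edge_homotopic hK (hcz a _) (hzu a _) h
  rw [← mk_trans, Path.Homotopic.Quotient.eq.2 hhom]
  exact Path.Homotopic.Quotient.eq.2 (edge_trans_edge_homotopic hK hcw hwb (hcz b _) (hzu b _))

section IsEdgeCompatible

variable {c : V} {hc : c ∈ K.vertexSet}
  {φ : ∀ ⦃u⦄ (hu : u ∈ K.vertexSet), Path.Homotopic.Quotient (K.vertex hc) (K.vertex hu)}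

theorem IsEdgeCompatible.trans_starSegment_eq_of_pos (hφ : K.IsEdgeCompatible φ) {a u : V}
    {x : K.space} (hxa : x.1 ∈ K.closedStar a) (hu : 0 < x.1 u) :
    (φ (mem_vertexSet_of_mem_closedStar hxa)).trans (.mk (K.starSegment hxa)) =
      (φ (mem_vertexSet_of_mem_closedStar (mem_closedStar_of_pos hu))).trans
        (.mk (K.starSegment (mem_closedStar_of_pos hu))) := by
  obtain ⟨σ, hσ, haσ, hxσ⟩ := id hxa
  have huσ := mem_of_mem_closedSimplex_of_pos hxσ hu
  have hauσ : ({a, u} : Finset V) ⊆ σ := by simp [Finset.insert_subset_iff, haσ, huσ]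
  have hau : ({a, u} : Finset V) ∈ K.faces := K.down_closed hσ hauσ (by simp)
  rw [← hφ hau, trans_assoc, ← mk_trans]
  congr 1
  refine Path.Homotopic.Quotient.eq.2 (homotopic_of_range_subset_closedStar (v := a)
    (range_starSegment_subset_self hxa) ?_)
  rw [Path.trans_range]
  exact union_subset (range_edge_subset hau hσ hauσ haσ)
    (range_starSegment_subset _ hσ huσ haσ hxσ)

theorem IsEdgeCompatible.exists_locally_compatible (hφ : K.IsEdgeCompatible φ) :
    ∃ ψ : ∀ x : K.space, Path.Homotopic.Quotient (K.vertex hc) x, ∀ x, ∃ U ∈ 𝓝 x,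
      ∀ ⦃y z⦄ (γ : Path y z), Set.range γ ⊆ U → (ψ y).trans (.mk γ) = ψ z := by
  choose u hu using exists_coord_pos (K := K)
  let ψ (x : K.space) := (φ _).trans (.mk (K.starSegment (mem_closedStar_of_pos (hu x))))
  have hψ : ∀ {a} {y : K.space} (hy : y.1 ∈ K.closedStar a),
      ψ y = (φ _).trans (.mk (K.starSegment hy)) :=
    fun hy => (hφ.trans_starSegment_eq_of_pos hy (hu _)).symm
  refine ⟨ψ, fun x => ⟨{y | 0 < y.1 (u x)}, ?_, fun y z γ hγ => ?_⟩⟩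
  · exact (isOpen_lt continuous_const ((continuous_apply _).comp continuous_subtype_val)).mem_nhds
      (hu x)
  have hstar : {y : K.space | 0 < y.1 (u x)} ⊆ Subtype.val ⁻¹' K.closedStar (u x) :=
    fun y hy => mem_closedStar_of_pos hy
  rw [hψ (hstar (hγ ⟨0, γ.source⟩)), hψ (hstar (hγ ⟨1, γ.target⟩)), trans_assoc, ← mk_trans]
  congr 1
  refine Path.Homotopic.Quotient.eq.2 (homotopic_of_range_subset_closedStar ?_
    (range_starSegment_subset_self _))
  rw [Path.trans_range]
  exact union_subset (range_starSegment_subset_self _) (hγ.trans hstar)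

end IsEdgeCompatible

end SComplex

end

/-- Every `4`-conic simplicial complex is simply connected: its
geometric realization is path-connected with trivial fundamental group. -/
theorem four_conic_implies_simply_connected {V : Type*} (K : SComplex V)
    (hK : K.IsConic 4) :
    SimplyConnectedSpace K.space := by
  obtain ⟨c, hc, -⟩ := hK.exists_cone (S := ∅) (Set.empty_subset _) ∅ (by simp) (by simp)
  obtain ⟨φ, hφ⟩ := SComplex.exists_isEdgeCompatible hK hc
  obtain ⟨ψ, hψ⟩ := hφ.exists_locally_compatible
  exact simplyConnectedSpace_of_trans_mk_eq ψ (Path.Homotopic.Quotient.trans_mk_eq_of_local ψ hψ)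
end

section
/- There exists an infinite 3-ample simplicial complex K containing a cycle of length 4 (a 4-cycle subcomplex of the 1-skeleton) whose fundamental class is nontrivial in the first homology group H_1(K); in particular K is not simply connected. -/
open Finset
open scoped Classical

open Finsupp in
/-- The simplicial boundary map `∂₁` on ordered `1`-chains: `∂₁(v, w) = w - v`. -/
noncomputable def bdry1 (V : Type*) : ((V × V) →₀ ℤ) →ₗ[ℤ] (V →₀ ℤ) :=
  Finsupp.linearCombination ℤ (fun e : V × V => single e.2 (1 : ℤ) - single e.1 (1 : ℤ))

open Finsupp in
/-- The simplicial boundary map `∂₂` on ordered `2`-chains: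
`∂₂(u, v, w) = (v, w) - (u, w) + (u, v)`. -/
noncomputable def bdry2 (V : Type*) : ((V × V × V) →₀ ℤ) →ₗ[ℤ] ((V × V) →₀ ℤ) :=
  Finsupp.linearCombination ℤ (fun t : V × V × V =>
    single (t.2.1, t.2.2) (1 : ℤ) - single (t.1, t.2.2) (1 : ℤ) + single (t.1, t.2.1) (1 : ℤ))

/-- Ordered `1`-chains of the complex `K`: finitely supported `ℤ`-combinations of
ordered pairs whose vertex set is a simplex of `K`. -/
noncomputable def chains1 {V : Type*} (K : SComplex V) : Submodule ℤ ((V × V) →₀ ℤ) :=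
  Finsupp.supported ℤ ℤ {e : V × V | ({e.1, e.2} : Finset V) ∈ K.faces}

/-- Ordered `2`-chains of the complex `K`: finitely supported `ℤ`-combinations of
ordered triples whose vertex set is a simplex of `K`. -/
noncomputable def chains2 {V : Type*} (K : SComplex V) : Submodule ℤ ((V × V × V) →₀ ℤ) :=
  Finsupp.supported ℤ ℤ {t : V × V × V | ({t.1, t.2.1, t.2.2} : Finset V) ∈ K.faces}


/-!
Start from the 4-cycle `C` on `ZMod 4` and freely attach cone vertices: for every list `u` of at
most three vertices and every subcomplex `L` on `u`, a new vertex whose link is `L`. The new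
vertex is younger than everything in `u`, so its link inside `u` is exactly `L`; this gives
`3`-ampleness. Since at most three vertices of `C` are images of `u`, some vertex `m` of `C` is
missed, and `m + 2` is adjacent or equal to all of them; mapping each new vertex this way gives a
simplicial retraction `K → C`. Pulling back the winding cocycle of `C` yields a `1`-cocycle of `K`
that takes the value `4` on the 4-cycle, which is therefore not a boundary.
-/

namespace SComplex

open Finsupp

variable {V : Type*}

theorem linearCombination_bdry2_eq_zero {K : SComplex V} {φ : V × V → ℤ}
    (hφ : ∀ a b c, ({a, b, c} : Finset V) ∈ K.faces → φ (b, c) - φ (a, c) + φ (a, b) = 0)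
    {c : (V × V × V) →₀ ℤ} (hc : c ∈ chains2 K) :
    linearCombination ℤ φ (bdry2 V c) = 0 := by
  rw [bdry2, linearCombination_apply (l := c), map_finsuppSum, Finsupp.sum]
  refine Finset.sum_eq_zero fun t ht => ?_
  simp only [map_smul, map_add, map_sub, linearCombination_single, one_smul, hφ _ _ _ (hc ht),
    smul_zero]

theorem notMem_map_bdry2_of_cocycle {K : SComplex V} {φ : V × V → ℤ}
    (hφ : ∀ a b c, ({a, b, c} : Finset V) ∈ K.faces → φ (b, c) - φ (a, c) + φ (a, b) = 0)
    {z : (V × V) →₀ ℤ} (hz : linearCombination ℤ φ z ≠ 0) :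
    z ∉ (chains2 K).map (bdry2 V) := by
  rintro ⟨c, hc, rfl⟩
  exact hz (linearCombination_bdry2_eq_zero hφ hc)

end SComplex

section FourCycle

open Finsupp

variable {V : Type*}

noncomputable def fourCycle (a b c d : V) : (V × V) →₀ ℤ :=
  single (a, b) 1 + single (b, c) 1 + single (c, d) 1 + single (d, a) 1

theorem fourCycle_mem_chains1 {K : SComplex V} {a b c d : V}
    (hab : ({a, b} : Finset V) ∈ K.faces) (hbc : ({b, c} : Finset V) ∈ K.faces)
    (hcd : ({c, d} : Finset V) ∈ K.faces) (hda : ({d, a} : Finset V) ∈ K.faces) :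
    fourCycle a b c d ∈ chains1 K :=
  add_mem (add_mem (add_mem (single_mem_supported ℤ 1 hab) (single_mem_supported ℤ 1 hbc))
    (single_mem_supported ℤ 1 hcd)) (single_mem_supported ℤ 1 hda)

theorem bdry1_fourCycle (a b c d : V) : bdry1 V (fourCycle a b c d) = 0 := by
  simp only [fourCycle, bdry1, map_add, linearCombination_single, one_smul]
  abel

theorem linearCombination_fourCycle (φ : V × V → ℤ) (a b c d : V) :
    linearCombination ℤ φ (fourCycle a b c d) = φ (a, b) + φ (b, c) + φ (c, d) + φ (d, a) := by
  simp only [fourCycle, map_add, linearCombination_single, one_smul]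

end FourCycle

namespace ZMod4

/-- The representative of `b - a` in `{-1, 0, 1, 2}`. -/
def winding (a b : ZMod 4) : ℤ := ((b - a + 1).val : ℤ) - 1

theorem winding_cocycle : ∀ a b c : ZMod 4, b - a ≠ 2 → c - b ≠ 2 → c - a ≠ 2 →
    winding b c - winding a c + winding a b = 0 := by
  decide

theorem sub_ne_two_comm : ∀ a b : ZMod 4, a - b ≠ 2 ↔ b - a ≠ 2 := by
  decide

theorem sub_add_two_ne_two_of_ne : ∀ a m : ZMod 4, a ≠ m → a - (m + 2) ≠ 2 := by
  decide

theorem sub_ne_two_of_mem_edge : ∀ i a b : ZMod 4, (a = i ∨ a = i + 1) → (b = i ∨ b = i + 1) →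
    b - a ≠ 2 := by
  decide

end ZMod4

namespace AmpleCycle

open ZMod4

/-- `cone u f` is the apex of a cone over the faces listed in `f`, which lie on the vertices
listed in `u`; `sizeOf` serves as the age of a vertex. -/
inductive Vertex : Type
  | base : ZMod 4 → Vertex
  | cone : List Vertex → List (List Vertex) → Vertex

open Vertex

def linkFaces (f : List (List Vertex)) : Set (Finset Vertex) := {σ | ∃ l ∈ f, l.toFinset = σ}

structure IsConeData (u : List Vertex) (f : List (List Vertex)) : Prop where
  length_le : u.length ≤ 3
  mem_of_mem_face : ∀ σ ∈ linkFaces f, ∀ x ∈ σ, x ∈ u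
  down_closed : ∀ σ ∈ linkFaces f, ∀ τ ⊆ σ, τ.Nonempty → τ ∈ linkFaces f


theorem isConeData_nil {u : List Vertex} (hu : u.length ≤ 3) : IsConeData u [] :=
  ⟨hu, by simp [linkFaces], by simp [linkFaces]⟩

inductive IsFace : Finset Vertex → Prop
  | subset_edge (i : ZMod 4) {σ : Finset Vertex} :
      σ.Nonempty → σ ⊆ {base i, base (i + 1)} → IsFace σ
  | insert_cone {u : List Vertex} {f : List (List Vertex)} {σ : Finset Vertex} :
      IsConeData u f → (∀ τ ∈ linkFaces f, IsFace τ) → (σ = ∅ ∨ σ ∈ linkFaces f) →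
      IsFace (insert (cone u f) σ)

theorem IsFace.nonempty {σ : Finset Vertex} : IsFace σ → σ.Nonempty
  | .subset_edge _ h _ => h
  | .insert_cone .. => Finset.insert_nonempty _ _

theorem IsFace.mono {σ τ : Finset Vertex} (h : IsFace σ) (hτσ : τ ⊆ σ) (hτ : τ.Nonempty) :
    IsFace τ := by
  induction h with
  | subset_edge i _ hσ => exact .subset_edge i hτ (hτσ.trans hσ)
  | @insert_cone u f σ hd hL hσ _ =>
    by_cases hv : cone u f ∈ τ
    · rw [← Finset.insert_erase hv]
      refine .insert_cone hd hL ?_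
      rcases (τ.erase (cone u f)).eq_empty_or_nonempty with he | he
      · exact .inl he
      · have hsub := Finset.subset_insert_iff.1 hτσ
        rcases hσ with rfl | hσ
        · exact absurd (Finset.subset_empty.1 hsub) he.ne_empty
        · exact .inr (hd.down_closed σ hσ _ hsub he)
    · have hsub := (Finset.subset_insert_iff_of_notMem hv).1 hτσ
      rcases hσ with rfl | hσ
      · exact absurd (Finset.subset_empty.1 hsub) hτ.ne_empty
      · exact hL _ (hd.down_closed σ hσ τ hsub hτ)

noncomputable def K : SComplex Vertex where
  faces := {σ | IsFace σ}
  not_empty_mem h := Finset.not_nonempty_empty h.nonempty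
  down_closed := IsFace.mono

theorem isFace_edge (i : ZMod 4) : IsFace {base i, base (i + 1)} :=
  .subset_edge i (Finset.insert_nonempty _ _) subset_rfl

theorem isFace_singleton_cone {u : List Vertex} {f : List (List Vertex)} (hd : IsConeData u f)
    (hL : ∀ τ ∈ linkFaces f, IsFace τ) : IsFace {cone u f} :=
  Finset.insert_empty (a := cone u f) ▸ IsFace.insert_cone hd hL (.inl rfl)

theorem sizeOf_lt_sizeOf_cone {x : Vertex} {u : List Vertex} {f : List (List Vertex)}
    (hx : x ∈ u) : sizeOf x < sizeOf (cone u f) := by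
  have := List.sizeOf_lt_of_mem hx
  simp only [Vertex.cone.sizeOf_spec]
  omega

theorem exists_linkFaces_eq {S : Set (Finset Vertex)} (hS : S.Finite) :
    ∃ f, linkFaces f = S :=
  ⟨hS.toFinset.toList.map Finset.toList, by ext σ; simp [linkFaces]⟩

theorem mem_linkFaces_of_isFace_insert {u : List Vertex} {f : List (List Vertex)}
    {τ : Finset Vertex} (hτ : τ.Nonempty) (hτu : ∀ x ∈ τ, x ∈ u) (hvτ : cone u f ∉ τ)
    (h : IsFace (insert (cone u f) τ)) : τ ∈ linkFaces f := by
  generalize hs : insert (cone u f) τ = s at h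
  cases h with
  | subset_edge i _ hsub =>
    have := hsub (hs ▸ Finset.mem_insert_self _ _)
    simp at this
  | @insert_cone u' f' σ hd' _ hσ =>
    by_cases hw : cone u' f' = cone u f
    · obtain ⟨rfl, rfl⟩ := Vertex.cone.inj hw
      have hsub : τ ⊆ σ := (Finset.subset_insert_iff_of_notMem hvτ).1
        (hs ▸ Finset.subset_insert _ _)
      rcases hσ with rfl | hσ
      · exact absurd (Finset.subset_empty.1 hsub) hτ.ne_empty
      · exact hd'.down_closed σ hσ τ hsub hτ
    · have hwτ : cone u' f' ∈ τ :=
        (Finset.mem_insert.1 (hs ▸ Finset.mem_insert_self _ _)).resolve_left hw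
      have hvσ : cone u f ∈ σ :=
        (Finset.mem_insert.1 (hs ▸ Finset.mem_insert_self _ _)).resolve_left (Ne.symm hw)
      rcases hσ with rfl | hσ
      · simp at hvσ
      · have h₁ := sizeOf_lt_sizeOf_cone (f := f) (hτu _ hwτ)
        have h₂ := sizeOf_lt_sizeOf_cone (f := f') (hd'.mem_of_mem_face σ hσ _ hvσ)
        omega

theorem isAmple_K : K.IsAmple 3 := by
  refine ⟨⟨_, isFace_singleton_cone (u := [])
    (isConeData_nil (Nat.zero_le _)) (by simp [linkFaces])⟩, ?_⟩
  intro U _ hU L hLK hLU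
  have hLU' : ∀ σ ∈ L.faces, ∀ x ∈ σ, x ∈ U := fun σ hσ x hx =>
    hLU (L.down_closed hσ (Finset.singleton_subset_iff.2 hx) (Finset.singleton_nonempty x))
  obtain ⟨f, hf⟩ := exists_linkFaces_eq (S := L.faces)
    ((U.powerset : Set (Finset Vertex)).toFinite.subset fun σ hσ =>
      Finset.mem_powerset.2 fun x hx => hLU' σ hσ x hx)
  have hd : IsConeData U.toList f :=
    ⟨by simpa using hU, fun σ hσ x hx => Finset.mem_toList.2 (hLU' σ (hf ▸ hσ) x hx),
      fun σ hσ τ hτσ hτ => hf ▸ L.down_closed (hf ▸ hσ) hτσ hτ⟩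
  have hfK : ∀ τ ∈ linkFaces f, IsFace τ := fun τ hτ => hLK (hf ▸ hτ)
  have hvU : cone U.toList f ∉ U := fun h =>
    (sizeOf_lt_sizeOf_cone (f := f) (Finset.mem_toList.2 h)).false
  refine ⟨cone U.toList f, isFace_singleton_cone hd hfK, ?_⟩
  rw [← hf]
  ext τ
  constructor
  · rintro ⟨⟨hτ, hvτ, hins⟩, hτU⟩
    exact mem_linkFaces_of_isFace_insert (IsFace.nonempty hτ)
      (fun x hx => Finset.mem_toList.2 (hτU hx)) hvτ hins
  · intro hτ
    have hτU : ∀ x ∈ τ, x ∈ U := hLU' τ (hf ▸ hτ)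
    exact ⟨⟨hfK τ hτ, fun h => hvU (hτU _ h), .insert_cone hd hfK (.inr hτ)⟩, hτU⟩

def tower : ℕ → Vertex
  | 0 => base 0
  | n + 1 => cone [tower n] []

theorem tower_mem_vertexSet (n : ℕ) : tower n ∈ K.vertexSet := by
  cases n with
  | zero => exact .subset_edge 0 (Finset.singleton_nonempty _) (by simp [tower])
  | succ n => exact isFace_singleton_cone (isConeData_nil (by simp)) (by simp [linkFaces])

theorem tower_injective : Function.Injective tower :=
  (strictMono_nat_of_lt_succ (f := fun n => sizeOf (tower n)) fun n =>
    sizeOf_lt_sizeOf_cone (f := []) (List.mem_singleton_self (tower n))).injective.of_comp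

theorem vertexSet_infinite : K.vertexSet.Infinite :=
  Set.infinite_of_injective_forall_mem tower_injective tower_mem_vertexSet

noncomputable def retract : Vertex → ZMod 4
  | base i => i
  | cone u _ => Classical.epsilon (fun m => m ∉ u.map retract) + 2

theorem retract_base (i : ZMod 4) : retract (base i) = i := by
  rw [retract]

theorem sub_retract_cone_ne_two {u : List Vertex} {f : List (List Vertex)} (hu : u.length ≤ 3)
    {x : Vertex} (hx : x ∈ u) : retract x - retract (cone u f) ≠ 2 := by
  have hmiss : ∃ m, m ∉ u.map retract := by
    by_contra! h
    have := (Finset.card_le_card (s := Finset.univ) fun m _ => List.mem_toFinset.2 (h m)).trans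
      (List.toFinset_card_le (u.map retract))
    simp only [Finset.card_univ, ZMod.card, List.length_map] at this
    omega
  rw [retract]
  exact sub_add_two_ne_two_of_ne _ _ fun h =>
    Classical.epsilon_spec hmiss (h ▸ List.mem_map_of_mem hx)

theorem IsFace.sub_retract_ne_two {σ : Finset Vertex} (h : IsFace σ) :
    ∀ x ∈ σ, ∀ y ∈ σ, retract y - retract x ≠ 2 := by
  induction h with
  | subset_edge i _ hσ =>
    intro x hx y hy
    have hretract : ∀ z ∈ ({base i, base (i + 1)} : Finset Vertex),
        retract z = i ∨ retract z = i + 1 := by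
      simp only [Finset.mem_insert, Finset.mem_singleton]
      rintro z (rfl | rfl) <;> simp [retract_base]
    exact sub_ne_two_of_mem_edge i _ _ (hretract x (hσ hx)) (hretract y (hσ hy))
  | @insert_cone u f σ hd _ hσ ih =>
    have hσu : ∀ z ∈ σ, z ∈ u := by
      rcases hσ with rfl | hσ
      · simp
      · exact hd.mem_of_mem_face σ hσ
    intro x hx y hy
    rcases Finset.mem_insert.1 hx with rfl | hx <;> rcases Finset.mem_insert.1 hy with rfl | hy
    · rw [sub_self]; decide
    · exact sub_retract_cone_ne_two hd.length_le (hσu y hy)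
    · exact (sub_ne_two_comm _ _).1 (sub_retract_cone_ne_two hd.length_le (hσu x hx))
    · rcases hσ with rfl | hσ
      · simp at hx
      · exact ih σ hσ x hx y hy

theorem fourCycle_notMem_boundaries :
    fourCycle (base 0) (base 1) (base 2) (base 3) ∉ (chains2 K).map (bdry2 Vertex) := by
  refine SComplex.notMem_map_bdry2_of_cocycle (φ := fun e => winding (retract e.1) (retract e.2))
    (fun a b c h => winding_cocycle _ _ _ ?_ ?_ ?_) ?_
  · exact IsFace.sub_retract_ne_two h a (by simp) b (by simp)
  · exact IsFace.sub_retract_ne_two h b (by simp) c (by simp)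
  · exact IsFace.sub_retract_ne_two h a (by simp) c (by simp)
  · simp only [linearCombination_fourCycle, retract_base]
    decide

end AmpleCycle

open Finsupp in
/-- There is an infinite `3`-ample simplicial complex containing a
`4`-cycle whose fundamental class is nontrivial in `H₁`: the corresponding `1`-cycle
is a cycle of the simplicial chain complex of `K` which is not a boundary.  In
particular `K` is not simply connected. -/
theorem exists_three_ample_with_nontrivial_four_cycle :
    ∃ (V : Type) (K : SComplex V) (v₀ v₁ v₂ v₃ : V),
      K.vertexSet.Infinite ∧ K.IsAmple 3 ∧
      (v₀ ≠ v₁ ∧ v₀ ≠ v₂ ∧ v₀ ≠ v₃ ∧ v₁ ≠ v₂ ∧ v₁ ≠ v₃ ∧ v₂ ≠ v₃) ∧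
      ({v₀, v₁} : Finset V) ∈ K.faces ∧ ({v₁, v₂} : Finset V) ∈ K.faces ∧
      ({v₂, v₃} : Finset V) ∈ K.faces ∧ ({v₃, v₀} : Finset V) ∈ K.faces ∧
      (single (v₀, v₁) (1 : ℤ) + single (v₁, v₂) 1 + single (v₂, v₃) 1 +
          single (v₃, v₀) 1) ∈ chains1 K ∧
      bdry1 V (single (v₀, v₁) (1 : ℤ) + single (v₁, v₂) 1 + single (v₂, v₃) 1 +
          single (v₃, v₀) 1) = 0 ∧
      (single (v₀, v₁) (1 : ℤ) + single (v₁, v₂) 1 + single (v₂, v₃) 1 +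
          single (v₃, v₀) 1) ∉ Submodule.map (bdry2 V) (chains2 K) := by
  open AmpleCycle Vertex in
  have h₀₁ : ({base 0, base 1} : Finset Vertex) ∈ K.faces := isFace_edge 0
  have h₁₂ : ({base 1, base 2} : Finset Vertex) ∈ K.faces := isFace_edge 1
  have h₂₃ : ({base 2, base 3} : Finset Vertex) ∈ K.faces := isFace_edge 2
  have h₃₀ : ({base 3, base 0} : Finset Vertex) ∈ K.faces := isFace_edge 3
  exact ⟨Vertex, K, base 0, base 1, base 2, base 3, vertexSet_infinite, isAmple_K,
    by simp only [ne_eq, base.injEq]; decide, h₀₁, h₁₂, h₂₃, h₃₀,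
    fourCycle_mem_chains1 h₀₁ h₁₂ h₂₃ h₃₀, bdry1_fourCycle _ _ _ _, fourCycle_notMem_boundaries⟩
end

section
/- If K_1 is an r_1-conic simplicial complex and K_2 is an r_2-conic simplicial complex, then the simplicial join K_1 * K_2 is (r_1 + r_2 + 1)-conic. -/
open Finset
open scoped Classical

namespace SComplex

variable {V₁ V₂ : Type*}

/-- The simplicial join `K₁ * K₂` of two complexes (on the disjoint union of their
vertex types): simplices are the unions `σ₁ ∪ σ₂` with `σ₁` a simplex of `K₁` or empty
and `σ₂` a simplex of `K₂` or empty, not both empty. -/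
def join (K₁ : SComplex V₁) (K₂ : SComplex V₂) : SComplex (V₁ ⊕ V₂) where
  faces := {σ | σ.Nonempty ∧ (σ.toLeft = ∅ ∨ σ.toLeft ∈ K₁.faces) ∧
    (σ.toRight = ∅ ∨ σ.toRight ∈ K₂.faces)}
  not_empty_mem := by
    rintro ⟨h, -, -⟩
    exact Finset.not_nonempty_empty h
  down_closed := by
    rintro s t ⟨-, hs₁, hs₂⟩ hts ht
    refine ⟨ht, ?_, ?_⟩
    · rcases Finset.eq_empty_or_nonempty t.toLeft with h | h
      · exact Or.inl h
      · refine Or.inr ?_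
        rcases hs₁ with h' | h'
        · exact absurd (Finset.subset_empty.mp
            (h' ▸ Finset.toLeft_subset_toLeft hts)) h.ne_empty
        · exact K₁.down_closed h' (Finset.toLeft_subset_toLeft hts) h
    · rcases Finset.eq_empty_or_nonempty t.toRight with h | h
      · exact Or.inl h
      · refine Or.inr ?_
        rcases hs₂ with h' | h'
        · exact absurd (Finset.subset_empty.mp
            (h' ▸ Finset.toRight_subset_toRight hts)) h.ne_empty
        · exact K₂.down_closed h' (Finset.toRight_subset_toRight hts) h

end SComplex


namespace SComplex

variable {V₁ V₂ : Type*}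

/-- The "left projection" of a subcomplex of a join. -/
def projL (L : SComplex (V₁ ⊕ V₂)) : SComplex V₁ where
  faces := {τ | τ.Nonempty ∧ ∃ σ ∈ L.faces, τ ⊆ σ.toLeft}
  not_empty_mem h := Finset.not_nonempty_empty h.1
  down_closed := by
    rintro s t ⟨-, σ, hσ, hs⟩ hts ht
    exact ⟨ht, σ, hσ, hts.trans hs⟩

/-- The "right projection" of a subcomplex of a join. -/
def projR (L : SComplex (V₁ ⊕ V₂)) : SComplex V₂ where
  faces := {τ | τ.Nonempty ∧ ∃ σ ∈ L.faces, τ ⊆ σ.toRight}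
  not_empty_mem h := Finset.not_nonempty_empty h.1
  down_closed := by
    rintro s t ⟨-, σ, hσ, hs⟩ hts ht
    exact ⟨ht, σ, hσ, hts.trans hs⟩

lemma vertexSet_projL (L : SComplex (V₁ ⊕ V₂)) :
    (projL L).vertexSet = Sum.inl ⁻¹' L.vertexSet := by
  ext v
  simp only [vertexSet, projL, Set.mem_setOf_eq, Set.mem_preimage]
  constructor
  · rintro ⟨-, σ, hσ, hs⟩
    exact L.down_closed hσ (by simpa using hs) ⟨_, Finset.mem_singleton_self _⟩
  · intro h
    exact ⟨⟨v, Finset.mem_singleton_self v⟩, {Sum.inl v}, h, by simp⟩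

lemma vertexSet_projR (L : SComplex (V₁ ⊕ V₂)) :
    (projR L).vertexSet = Sum.inr ⁻¹' L.vertexSet := by
  ext v
  simp only [vertexSet, projR, Set.mem_setOf_eq, Set.mem_preimage]
  constructor
  · rintro ⟨-, σ, hσ, hs⟩
    exact L.down_closed hσ (by simpa using hs) ⟨_, Finset.mem_singleton_self _⟩
  · intro h
    exact ⟨⟨v, Finset.mem_singleton_self v⟩, {Sum.inr v}, h, by simp⟩

end SComplex

/-- Transport membership in a set of finsets along an extensional equality; this avoids
`DecidableEq`-instance mismatches. -/
lemma mem_of_forall_mem_iff {α : Type*} {s t : Finset α} {S : Set (Finset α)}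
    (h : t ∈ S) (e : ∀ x, x ∈ s ↔ x ∈ t) : s ∈ S := by
  have : s = t := Finset.ext e
  rwa [this]

/-- The join of an `r₁`-conic complex and an `r₂`-conic complex is
`(r₁ + r₂ + 1)`-conic. -/
theorem join_isConic {V₁ V₂ : Type*} (r₁ r₂ : ℤ) (hr₁ : -1 ≤ r₁) (hr₂ : -1 ≤ r₂)
    (K₁ : SComplex V₁) (K₂ : SComplex V₂)
    (h₁ : K₁.IsConic r₁) (h₂ : K₂.IsConic r₂) :
    (K₁.join K₂).IsConic (r₁ + r₂ + 1) := by
  intro L hL hfin hcard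
  open SComplex in
  -- `projL L` and `projR L` are subcomplexes of `K₁` and `K₂`.
  have hL1 : (SComplex.projL L).IsSubcomplex K₁ := by
    rintro τ ⟨hne, σ, hσ, hsub⟩
    obtain ⟨-, h1, -⟩ := hL hσ
    rcases h1 with h | h
    · exact absurd (Finset.subset_empty.mp (h ▸ hsub)) hne.ne_empty
    · exact K₁.down_closed h hsub hne
  have hL2 : (SComplex.projR L).IsSubcomplex K₂ := by
    rintro τ ⟨hne, σ, hσ, hsub⟩
    obtain ⟨-, -, h2⟩ := hL hσ
    rcases h2 with h | h
    · exact absurd (Finset.subset_empty.mp (h ▸ hsub)) hne.ne_empty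
    · exact K₂.down_closed h hsub hne
  have h1fin : (SComplex.projL L).vertexSet.Finite := by
    rw [SComplex.vertexSet_projL]; exact hfin.preimage Sum.inl_injective.injOn
  have h2fin : (SComplex.projR L).vertexSet.Finite := by
    rw [SComplex.vertexSet_projR]; exact hfin.preimage Sum.inr_injective.injOn
  -- the vertex set of `L` splits
  have hVL : L.vertexSet =
      Sum.inl '' (SComplex.projL L).vertexSet ∪ Sum.inr '' (SComplex.projR L).vertexSet := by
    rw [SComplex.vertexSet_projL, SComplex.vertexSet_projR]
    ext x
    cases x <;> simp
  have hdisj : Disjoint (Sum.inl '' (SComplex.projL L).vertexSet)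
      (Sum.inr '' (SComplex.projR L).vertexSet) := by
    rw [Set.disjoint_left]
    rintro x ⟨a, -, rfl⟩ ⟨b, -, h⟩
    exact Sum.inl_ne_inr h.symm
  have hsum : (SComplex.projL L).vertexSet.ncard + (SComplex.projR L).vertexSet.ncard
      = L.vertexSet.ncard := by
    rw [hVL, Set.ncard_union_eq hdisj (h1fin.image _) (h2fin.image _),
      Set.ncard_image_of_injective _ Sum.inl_injective,
      Set.ncard_image_of_injective _ Sum.inr_injective]
  by_cases hc : ((SComplex.projL L).vertexSet.ncard : ℤ) ≤ r₁
  · obtain ⟨v, hvK, hv⟩ := h₁ _ hL1 h1fin hc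
    have htl : ({Sum.inl v} : Finset (V₁ ⊕ V₂)).toLeft = {v} := by ext; simp
    have htr : ({Sum.inl v} : Finset (V₁ ⊕ V₂)).toRight = ∅ := by ext; simp
    refine ⟨Sum.inl v, ⟨⟨_, Finset.mem_singleton_self _⟩, Or.inr (htl ▸ hvK),
      Or.inl htr⟩, ?_⟩
    intro σ hσ
    obtain ⟨hne, hl, hr⟩ := hL hσ
    refine ⟨⟨Sum.inl v, by simp⟩, Or.inr ?_, ?_⟩
    · rcases hl with h | h
      · have h' : ∀ y : V₁, Sum.inl y ∉ σ := fun y hy => by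
          simpa [h] using Finset.mem_toLeft.mpr hy
        exact mem_of_forall_mem_iff hvK (fun x => by simp [h'])
      · exact mem_of_forall_mem_iff
          (hv _ ⟨Finset.nonempty_iff_ne_empty.mpr (fun e => K₁.not_empty_mem (e ▸ h)),
            σ, hσ, Finset.Subset.refl _⟩) (fun x => by simp)
    · rcases hr with h | h
      · refine Or.inl (Finset.eq_empty_iff_forall_notMem.mpr fun x hx => ?_)
        have hx' : Sum.inr x ∈ σ := by simpa using hx
        exact absurd (Finset.mem_toRight.mpr hx') (by simp [h])
      · exact Or.inr (mem_of_forall_mem_iff h (fun x => by simp))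
  · have hc2 : ((SComplex.projR L).vertexSet.ncard : ℤ) ≤ r₂ := by omega
    obtain ⟨v, hvK, hv⟩ := h₂ _ hL2 h2fin hc2
    have htl : ({Sum.inr v} : Finset (V₁ ⊕ V₂)).toLeft = ∅ := by ext; simp
    have htr : ({Sum.inr v} : Finset (V₁ ⊕ V₂)).toRight = {v} := by ext; simp
    refine ⟨Sum.inr v, ⟨⟨_, Finset.mem_singleton_self _⟩, Or.inl htl,
      Or.inr (htr ▸ hvK)⟩, ?_⟩
    intro σ hσ
    obtain ⟨hne, hl, hr⟩ := hL hσ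
    refine ⟨⟨Sum.inr v, by simp⟩, ?_, Or.inr ?_⟩
    · rcases hl with h | h
      · refine Or.inl (Finset.eq_empty_iff_forall_notMem.mpr fun x hx => ?_)
        have hx' : Sum.inl x ∈ σ := by simpa using hx
        exact absurd (Finset.mem_toLeft.mpr hx') (by simp [h])
      · exact Or.inr (mem_of_forall_mem_iff h (fun x => by simp))
    · rcases hr with h | h
      · have h' : ∀ y : V₂, Sum.inr y ∉ σ := fun y hy => by
          simpa [h] using Finset.mem_toRight.mpr hy
        exact mem_of_forall_mem_iff hvK (fun x => by simp [h'])
      · exact mem_of_forall_mem_iff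
          (hv _ ⟨Finset.nonempty_iff_ne_empty.mpr (fun e => K₂.not_empty_mem (e ▸ h)),
            σ, hσ, Finset.Subset.refl _⟩) (fun x => by simp)
end

section
/- Let r ≥ 1 be an integer, K an r-conic simplicial complex, M a simplicial complex and φ: M → K a simplicial map. If M̃ is obtained from M by an r-starring, then there exist a homeomorphism h: |M̃| → |M| and a simplicial map φ̃: M̃ → K such that |φ| ∘ h is homotopic to |φ̃|. In particular, |φ| is null-homotopic if and only if |φ̃| is null-homotopic. -/
open Finset
open scoped Classical

namespace SComplex

variable {V W : Type*}

/-- The affine extension of a vertex assignment `φ : W → (V → ℝ)` to barycentric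
coordinate functions. -/
noncomputable def affMap (φ : W → V → ℝ) (x : W → ℝ) : V → ℝ :=
  fun v => ∑ᶠ w, x w * φ w v

/-- The closed geometric simplex of `K` spanned by the vertices of `σ`. -/
def geomSimplex (K : SComplex V) (σ : Finset V) : Set (V → ℝ) :=
  {x ∈ K.realization | ∀ v, v ∉ σ → x v = 0}

/-- `L` is a (geometric) subdivision of `K` via the vertex placement `φ`: the affine
extension of `φ` maps `|L|` bijectively onto `|K|` and maps each closed simplex of `L`
into a closed simplex of `K`. -/
def IsSubdivisionVia (L : SComplex W) (φ : W → V → ℝ) (K : SComplex V) : Prop :=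
  Set.BijOn (affMap φ) L.realization K.realization ∧
  ∀ σ ∈ L.faces, ∃ τ ∈ K.faces, affMap φ '' L.geomSimplex σ ⊆ K.geomSimplex τ

/-- `f` realizes a simplicial isomorphism from `K` onto `L`. -/
def IsIsoMap (f : V → W) (K : SComplex V) (L : SComplex W) : Prop :=
  Set.InjOn f K.vertexSet ∧
  (∀ σ ∈ K.faces, σ.image f ∈ L.faces) ∧
  (∀ τ ∈ L.faces, ∃ σ ∈ K.faces, σ.image f = τ)

/-- Two simplicial complexes are isomorphic. -/
def Iso (K : SComplex V) (L : SComplex W) : Prop :=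
  ∃ f : V → W, IsIsoMap f K L

/-- Two simplicial complexes are PL homeomorphic if they admit simplicially isomorphic
subdivisions. -/
def PLHomeo (K : SComplex V) (L : SComplex W) : Prop :=
  ∃ (A B : Type) (K' : SComplex A) (L' : SComplex B)
    (φ : A → V → ℝ) (ψ : B → W → ℝ),
      IsSubdivisionVia K' φ K ∧ IsSubdivisionVia L' ψ L ∧ Iso K' L'

end SComplex

/-- The standard `n`-simplex as a simplicial complex: all nonempty subsets of
`Fin (n+1)`. -/
def stdSimplexC (n : ℕ) : SComplex (Fin (n + 1)) where
  faces := {σ | σ.Nonempty}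
  not_empty_mem := by simp [Set.mem_setOf_eq]
  down_closed := fun _ _ h => h

/-- The boundary of the standard simplex on `Fin j`: all nonempty proper subsets.
For `j = m + 2` this is the combinatorial `m`-sphere `∂Δ^{m+1}`; for `j = 1` it is the
empty complex (the `(-1)`-sphere). -/
def boundaryC (j : ℕ) : SComplex (Fin j) where
  faces := {σ | σ.Nonempty ∧ σ ≠ Finset.univ}
  not_empty_mem := by
    rintro ⟨h, -⟩; exact Finset.not_nonempty_empty h
  down_closed := by
    rintro s t ⟨-, hs⟩ hts ht
    refine ⟨ht, fun h => hs ?_⟩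
    subst h
    exact Finset.univ_subset_iff.mp hts

namespace SComplex

variable {V : Type*}

/-- A combinatorial `d`-ball: a complex PL homeomorphic to the standard `d`-simplex. -/
def IsCombBall (d : ℕ) (K : SComplex V) : Prop := K.PLHomeo (stdSimplexC d)

/-- A complex PL homeomorphic to `∂Δ^{j-1}`, i.e. a combinatorial `(j-2)`-sphere. -/
def IsCombSphereAux (j : ℕ) (K : SComplex V) : Prop := K.PLHomeo (boundaryC j)

/-- The link of a simplex `σ` in `K`, as a simplicial complex. -/
def linkC (K : SComplex V) (σ : Finset V) : SComplex V where
  faces := {τ | τ ∈ K.faces ∧ (∀ v ∈ σ, v ∉ τ) ∧ τ ∪ σ ∈ K.faces}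
  not_empty_mem := fun h => K.not_empty_mem h.1
  down_closed := by
    rintro s t ⟨hs, hdisj, huni⟩ hts ht
    refine ⟨K.down_closed hs hts ht, fun v hv hvt => hdisj v hv (hts hvt), ?_⟩
    refine K.down_closed huni (Finset.union_subset_union_left hts) ?_
    exact ht.mono Finset.subset_union_left

/-- A combinatorial (PL) `n`-manifold: the link of every simplex `σ` is a combinatorial
sphere of dimension `n - dim σ - 1` (PL homeomorphic to the boundary of the standard
`(n - dim σ)`-simplex). -/
def IsCombManifold (n : ℕ) (M : SComplex V) : Prop :=
  M.faces.Nonempty ∧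
  ∀ σ ∈ M.faces, (M.linkC σ).IsCombSphereAux (n + 2 - σ.card)

/-- `(D, bD)` is a triangulated `d`-disk: there is a homeomorphism from `|D|` to the
closed unit `d`-ball carrying `|bD|` exactly onto the boundary sphere. -/
def IsTriangulatedDisk (D bD : SComplex V) (d : ℕ) : Prop :=
  bD.IsSubcomplex D ∧
  ∃ e : D.space ≃ₜ (Metric.closedBall (0 : EuclideanSpace ℝ (Fin d)) 1),
    ∀ x : D.space, (x : V → ℝ) ∈ bD.realization ↔
      ((e x : EuclideanSpace ℝ (Fin d)) ∈
        Metric.sphere (0 : EuclideanSpace ℝ (Fin d)) 1)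

/-- The faces of the cone with apex `w` over the family of faces `F`. -/
def coneFaces (w : V) (F : Set (Finset V)) : Set (Finset V) :=
  F ∪ (insert w '' F) ∪ {{w}}

/-- `Mt` is obtained from `M` by starring the triangulated `d`-disk `D` (with boundary
`bD`) at the new vertex `w`: all simplices of `D` not in `bD` are removed and the cone
`w ∂D` is attached. -/
def IsStarringAt (r : ℤ) (M Mt : SComplex V) (D bD : SComplex V) (d : ℕ) (w : V) :
    Prop :=
  D.IsSubcomplex M ∧
  D.vertexSet.Finite ∧ (D.vertexSet.ncard : ℤ) ≤ r ∧
  IsTriangulatedDisk D bD d ∧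
  (∀ σ ∈ M.faces, ∀ τ ∈ D.faces, τ ∉ bD.faces → τ ⊆ σ → σ ∈ D.faces) ∧
  w ∉ M.vertexSet ∧
  Mt.faces = (M.faces \ {τ | τ ∈ D.faces ∧ τ ∉ bD.faces}) ∪ coneFaces w bD.faces

/-- `Mt` is obtained from `M` by an `r`-starring. -/
def IsStarring (r : ℤ) (M Mt : SComplex V) : Prop :=
  ∃ (D bD : SComplex V) (d : ℕ) (w : V), IsStarringAt r M Mt D bD d w

/-- `M` `r`-stars to `L`: `L` is obtained from `M` by a finite sequence of
`r`-starrings. -/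
def StarsTo (r : ℤ) : SComplex V → SComplex V → Prop :=
  Relation.ReflTransGen (IsStarring r)

end SComplex

/-- A simplicial map between simplicial complexes. -/
structure SMap {V W : Type*} (M : SComplex V) (K : SComplex W) where
  toFun : V → W
  map_faces : ∀ σ ∈ M.faces, σ.image toFun ∈ K.faces

/-- The geometric realization of a vertex map: push barycentric coordinates forward,
summing the coordinates over each fiber. -/
noncomputable def pushforward {V W : Type*} (f : V → W) (x : V → ℝ) : W → ℝ :=
  fun w => ∑ᶠ v ∈ f ⁻¹' {w}, x v

/-- Two (ambient-valued) maps into the realization of `K` are homotopic through `|K|`: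
there is a continuous homotopy with values in `|K|` whose underlying endpoint functions
are `f` and `g`. -/
def AmbientHomotopic {X : Type*} [TopologicalSpace X] {W : Type*} (K : SComplex W)
    (f g : X → (W → ℝ)) : Prop :=
  ∃ H : C(X × unitInterval, K.space),
    (∀ x, ((H (x, 0) : K.space) : W → ℝ) = f x) ∧
    (∀ x, ((H (x, 1) : K.space) : W → ℝ) = g x)

/-- An (ambient-valued) map into `|K|` is null-homotopic through `|K|`. -/
def AmbientNullhomotopic {X : Type*} [TopologicalSpace X] {W : Type*} (K : SComplex W)
    (f : X → (W → ℝ)) : Prop :=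
  ∃ c : K.space, AmbientHomotopic K f (fun _ => ((c : W → ℝ)))

/-!
The homeomorphism `|Mt| ≃ |M|` is the identity away from the open disk. On the disk it matches
the cone `w ∂D` with `|D|` through the ball parametrization `e`: the point of the cone at height
`t` over `z ∈ |∂D|` goes to `e⁻¹((1 - t) • e z)`.

Conicity applied to the image of `D` gives a vertex `u` of `K` whose closed star contains
`φ(D)`; `φt` is `φ` with `w ↦ u`. In ball coordinates `b` on `|D|`, the homotopy at time `s` is
`m • u + (1 - m) • |φ|(e⁻¹(b / (1 - m)))` with `m = min s (1 - ‖b‖)`. It stays in the star of `u`,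
equals `|φ|` at `s = 0` and on `∂D`, and equals `|φt| ∘ h⁻¹` at `s = 1`.

Continuity at the apex of the cone and at the centre of the ball holds because there each
formula is a vanishing scalar times a bounded term.
-/

section

variable {V W : Type*}

namespace SComplex

variable {K L : SComplex V} {x : V → ℝ} {σ s : Finset V}

lemma nonempty_of_mem_faces (hσ : σ ∈ K.faces) : σ.Nonempty :=
  Finset.nonempty_iff_ne_empty.2 fun h => K.not_empty_mem (h ▸ hσ)

lemma realization_mono (h : K.IsSubcomplex L) : K.realization ⊆ L.realization := by
  rintro x ⟨σ, hσ, hx⟩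
  exact ⟨σ, h hσ, hx⟩

lemma coord_nonneg (hx : x ∈ K.realization) (v : V) : 0 ≤ x v := by
  obtain ⟨σ, -, h0, -⟩ := hx
  exact h0 v

lemma sum_eq_one_of_support_subset (hx : x ∈ K.realization) (hσ : ∀ v, x v ≠ 0 → v ∈ σ) :
    ∑ v ∈ σ, x v = 1 := by
  obtain ⟨τ, -, -, hτ, h1⟩ := hx
  have hστ : ∑ v ∈ σ ∩ τ, x v = ∑ v ∈ σ, x v :=
    Finset.sum_subset Finset.inter_subset_left fun v hv hvστ =>
      hτ v fun hvτ => hvστ (Finset.mem_inter.2 ⟨hv, hvτ⟩)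
  have hτσ : ∑ v ∈ σ ∩ τ, x v = ∑ v ∈ τ, x v :=
    Finset.sum_subset Finset.inter_subset_right fun v hv hvστ => by
      by_contra h
      exact hvστ (Finset.mem_inter.2 ⟨hσ v h, hv⟩)
  rw [← hστ, hτσ, h1]

lemma exists_support (hx : x ∈ K.realization) : ∃ s ∈ K.faces, ∀ v, v ∈ s ↔ x v ≠ 0 := by
  obtain ⟨σ, hσ, -, hzero, h1⟩ := hx
  refine ⟨σ.filter (x · ≠ 0), K.down_closed hσ (Finset.filter_subset _ _) ?_, fun v => ?_⟩
  · by_contra h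
    rw [Finset.not_nonempty_iff_eq_empty, Finset.filter_eq_empty_iff] at h
    rw [Finset.sum_eq_zero fun v hv => not_not.1 (h hv)] at h1
    exact zero_ne_one h1
  · simp only [Finset.mem_filter, and_iff_right_iff_imp]
    exact fun h => by_contra fun hv => h (hzero v hv)

lemma coord_le_one (hx : x ∈ K.realization) (v : V) : x v ≤ 1 := by
  obtain ⟨s, -, hs⟩ := exists_support hx
  by_cases hv : v ∈ s
  · rw [← sum_eq_one_of_support_subset hx fun u => (hs u).2]
    exact Finset.single_le_sum (fun u _ => coord_nonneg hx u) hv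
  · rw [not_not.1 (mt (hs v).2 hv)]
    exact zero_le_one

lemma eq_single_of_apply_eq_one {a : V} (hx : x ∈ K.realization) (ha : x a = 1) :
    x = Pi.single a 1 := by
  obtain ⟨s, -, hs⟩ := exists_support hx
  have has : a ∈ s := (hs a).2 (by rw [ha]; exact one_ne_zero)
  have hrest : ∑ v ∈ s.erase a, x v = 0 := by
    have := Finset.sum_erase_add s x has
    rw [sum_eq_one_of_support_subset hx fun u => (hs u).2, ha] at this
    linarith
  rw [Finset.sum_eq_zero_iff_of_nonneg fun v _ => coord_nonneg hx v] at hrest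
  funext v
  rcases eq_or_ne v a with rfl | hva
  · simp [ha]
  · rw [Pi.single_eq_of_ne hva]
    by_cases hv : v ∈ s
    · exact hrest v (Finset.mem_erase.2 ⟨hva, hv⟩)
    · exact not_not.1 (mt (hs v).2 hv)

lemma norm_coord_le_one (hx : x ∈ K.realization) (v : V) : ‖x v‖ ≤ 1 :=
  abs_le.2 ⟨by linarith [coord_nonneg hx v], coord_le_one hx v⟩

lemma mem_faces_of_support (hx : x ∈ K.realization) (hs : ∀ v, v ∈ s ↔ x v ≠ 0) :
    s ∈ K.faces := by
  obtain ⟨t, ht, hts⟩ := exists_support hx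
  rwa [show s = t from Finset.ext fun v => (hs v).trans (hts v).symm]

lemma mem_realization_of_support_subset (hx : x ∈ K.realization) (hσ : σ ∈ L.faces)
    (hsupp : ∀ v, x v ≠ 0 → v ∈ σ) : x ∈ L.realization :=
  ⟨σ, hσ, coord_nonneg hx, fun v hv => by_contra fun h => hv (hsupp v h),
    sum_eq_one_of_support_subset hx hsupp⟩

lemma exists_mem_geomSimplex (hx : x ∈ K.realization) : ∃ σ ∈ K.faces, x ∈ K.geomSimplex σ := by
  obtain ⟨σ, hσ, -, hzero, -⟩ := id hx
  exact ⟨σ, hσ, hx, hzero⟩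

lemma single_mem_realization {a : V} (ha : {a} ∈ K.faces) : Pi.single a 1 ∈ K.realization :=
  ⟨{a}, ha, fun v => by rw [Pi.single_apply]; split_ifs <;> norm_num,
    fun v hv => Pi.single_eq_of_ne (Finset.notMem_singleton.1 hv) _, by simp⟩

lemma support_finite (hx : x ∈ K.realization) : (Function.support x).Finite := by
  obtain ⟨σ, -, -, hσ, -⟩ := hx
  exact σ.finite_toSet.subset fun v hv => by_contra fun h => hv (hσ v h)

lemma not_mem_of_not_mem_vertexSet {w : V} (hw : w ∉ K.vertexSet) (hσ : σ ∈ K.faces) :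
    w ∉ σ := fun h =>
  hw (K.down_closed hσ (Finset.singleton_subset_iff.2 h) (Finset.singleton_nonempty w))

lemma apply_eq_zero_of_not_mem_vertexSet {w : V} (hw : w ∉ K.vertexSet)
    (hx : x ∈ K.realization) : x w = 0 := by
  obtain ⟨σ, hσ, -, hzero, -⟩ := hx
  exact hzero w (not_mem_of_not_mem_vertexSet hw hσ)

lemma isClosed_setOf_mem_realization (K L : SComplex V) :
    IsClosed {x : K.space | (x : V → ℝ) ∈ L.realization} := by
  rw [← isOpen_compl_iff, isOpen_iff_forall_mem_open]
  intro x hx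
  obtain ⟨s, hs, hxs⟩ := exists_support x.2
  refine ⟨{y | ∀ v ∈ s, (y : V → ℝ) v ≠ 0}, fun y hy hyL => hx ?_, ?_, fun v hv => (hxs v).1 hv⟩
  · obtain ⟨t, ht, hyt⟩ := exists_support hyL
    have hst : s ⊆ t := fun v hv => (hyt v).2 (hy v hv)
    exact mem_realization_of_support_subset x.2 (L.down_closed ht hst (nonempty_of_mem_faces hs))
      fun v hv => (hxs v).2 hv
  · simp only [Set.ofPred_forall]
    exact isOpen_biInter_finset fun v _ =>
      isOpen_ne_fun ((continuous_apply v).comp continuous_subtype_val) continuous_const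

lemma smul_single_add_smul_mem_realization {a : V} {p : V → ℝ} {t : ℝ}
    (ha : insert a σ ∈ K.faces) (hp : p ∈ L.geomSimplex σ) (ht0 : 0 ≤ t) (ht1 : t ≤ 1) :
    t • Pi.single a 1 + (1 - t) • p ∈ K.realization := by
  have hp1 : ∑ v ∈ insert a σ, p v = 1 :=
    sum_eq_one_of_support_subset hp.1 fun v hv =>
      Finset.mem_insert_of_mem (by_contra fun h => hv (hp.2 v h))
  refine ⟨insert a σ, ha, fun v => ?_, fun v hv => ?_, ?_⟩
  · have := coord_nonneg hp.1 v
    simp only [Pi.add_apply, Pi.smul_apply, smul_eq_mul, Pi.single_apply]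
    split_ifs <;> nlinarith
  · rw [Finset.mem_insert, not_or] at hv
    simp [hv.1, hp.2 v hv.2]
  · simp only [Pi.add_apply, Pi.smul_apply, smul_eq_mul, Finset.sum_add_distrib,
      ← Finset.mul_sum, Finset.sum_pi_single', Finset.mem_insert_self, if_true, hp1]
    ring

variable {w : V} {y : V → ℝ}

lemma erase_mem_of_mem_coneFaces (hs : s ∈ coneFaces w L.faces) (hne : (s.erase w).Nonempty) :
    s.erase w ∈ L.faces := by
  rcases hs with (hs | ⟨τ, hτ, rfl⟩) | rfl
  · exact L.down_closed hs (Finset.erase_subset w s) hne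
  · exact L.down_closed hτ (Finset.erase_insert_subset w τ) hne
  · simp at hne

def cone (w : V) (L : SComplex V) : SComplex V where
  faces := coneFaces w L.faces
  not_empty_mem := by
    rintro ((h | ⟨τ, -, h⟩) | h)
    · exact L.not_empty_mem h
    · exact Finset.insert_ne_empty w τ h
    · exact Finset.singleton_ne_empty w h.symm
  down_closed := by
    intro s t hs hts hne
    by_cases hwt : w ∈ t
    · rcases (t.erase w).eq_empty_or_nonempty with h | h
      · right
        rw [Set.mem_singleton_iff, ← Finset.insert_erase hwt, h]
        rfl
      · left; right
        exact ⟨t.erase w, L.down_closed (erase_mem_of_mem_coneFaces hs (h.mono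
          (Finset.erase_subset_erase w hts))) (Finset.erase_subset_erase w hts) h,
          Finset.insert_erase hwt⟩
    · have hts' : t ⊆ s.erase w := fun v hv =>
        Finset.mem_erase.2 ⟨fun h => hwt (h ▸ hv), hts hv⟩
      left; left
      exact L.down_closed (erase_mem_of_mem_coneFaces hs (hne.mono hts')) hts' hne

lemma mem_of_mem_cone_faces (hs : s ∈ (cone w L).faces) (hw : w ∉ s) : s ∈ L.faces := by
  rcases hs with (hs | ⟨τ, -, rfl⟩) | rfl
  · exact hs
  · exact absurd (Finset.mem_insert_self w τ) hw
  · exact absurd (Finset.mem_singleton_self w) hw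

lemma mem_realization_of_mem_cone (hy : y ∈ (cone w L).realization) (hw : y w = 0) :
    y ∈ L.realization := by
  obtain ⟨s, hs, hys⟩ := exists_support hy
  exact mem_realization_of_support_subset hy
    (mem_of_mem_cone_faces hs fun h => (hys w).1 h hw) fun v => (hys v).2

/-- The point of the base of the cone seen from the apex `w` through `y`
(junk when `y w = 1`, i.e. at the apex). -/
noncomputable def coneBase (w : V) (y : V → ℝ) : V → ℝ :=
  (1 - y w)⁻¹ • Function.update y w 0

lemma coneBase_of_apply_eq_zero (h : y w = 0) : coneBase w y = y := by
  funext v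
  rcases eq_or_ne v w with rfl | hv <;> simp [coneBase, *]

lemma smul_single_add_smul_coneBase (h : y w ≠ 1) :
    y w • Pi.single w 1 + (1 - y w) • coneBase w y = y := by
  have h' : 1 - y w ≠ 0 := sub_ne_zero.2 (Ne.symm h)
  funext v
  rcases eq_or_ne v w with rfl | hv
  · simp [coneBase]
  · simp [coneBase, hv, h']

lemma coneBase_smul_single_add_smul {s : ℝ} {z : V → ℝ} (hz : z w = 0) (hs : s ≠ 0) :
    coneBase w ((1 - s) • Pi.single w 1 + s • z) = z := by
  funext v
  rcases eq_or_ne v w with rfl | hv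
  · simp [coneBase, hz]
  · simp [coneBase, hv, hz, hs]

lemma continuousOn_coneBase : ContinuousOn (coneBase w) {y | y w ≠ 1} :=
  ((continuous_const.sub (continuous_apply w)).continuousOn.inv₀ fun _ h =>
    sub_ne_zero.2 (Ne.symm h)).smul (continuous_id.update w continuous_const).continuousOn

lemma coneBase_mem_realization (hy : y ∈ (cone w L).realization) (h1 : y w ≠ 1) :
    coneBase w y ∈ L.realization := by
  obtain ⟨s, hs, hys⟩ := exists_support hy
  have hy1 : ∑ v ∈ insert w s, y v = 1 :=
    sum_eq_one_of_support_subset hy fun v hv => Finset.mem_insert_of_mem ((hys v).2 hv)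
  have hbase : ∑ v ∈ s.erase w, y v = 1 - y w := by
    rw [← Finset.erase_insert_eq_erase, eq_sub_iff_add_eq,
      Finset.sum_erase_add _ _ (Finset.mem_insert_self w s), hy1]
  have hne : (s.erase w).Nonempty := by
    by_contra h
    rw [Finset.not_nonempty_iff_eq_empty.1 h, Finset.sum_empty] at hbase
    exact h1 (by linarith)
  have hpos : 0 < 1 - y w := sub_pos.2 (lt_of_le_of_ne (coord_le_one hy w) h1)
  refine ⟨s.erase w, erase_mem_of_mem_coneFaces hs hne, fun v => ?_, fun v hv => ?_, ?_⟩
  · simp only [coneBase, Pi.smul_apply, smul_eq_mul, Function.update_apply]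
    split_ifs
    · simp
    · exact mul_nonneg (inv_nonneg.2 hpos.le) (coord_nonneg hy v)
  · simp only [coneBase, Pi.smul_apply, smul_eq_mul, Function.update_apply]
    split_ifs with hvw
    · simp
    · rw [not_not.1 (mt (hys v).2 fun h => hv (Finset.mem_erase.2 ⟨hvw, h⟩)), mul_zero]
  · have : ∀ v ∈ s.erase w, coneBase w y v = (1 - y w)⁻¹ * y v := fun v hv => by
      simp [coneBase, Finset.ne_of_mem_erase hv]
    rw [Finset.sum_congr rfl this, ← Finset.mul_sum, hbase, inv_mul_cancel₀ hpos.ne']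

variable {f : V → W}

def image (f : V → W) (K : SComplex V) : SComplex W where
  faces := (Finset.image f) '' K.faces
  not_empty_mem := by
    rintro ⟨σ, hσ, h⟩
    exact K.not_empty_mem (Finset.image_eq_empty.1 h ▸ hσ)
  down_closed := by
    rintro s t ⟨σ, hσ, rfl⟩ hts ht
    refine ⟨σ.filter (f · ∈ t), K.down_closed hσ (Finset.filter_subset _ _) ?_, ?_⟩
    · obtain ⟨u, hu⟩ := ht
      obtain ⟨v, hv, rfl⟩ := Finset.mem_image.1 (hts hu)
      exact ⟨v, Finset.mem_filter.2 ⟨hv, hu⟩⟩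
    · ext u
      simp only [Finset.mem_image, Finset.mem_filter]
      refine ⟨fun ⟨v, ⟨_, hv⟩, hvu⟩ => hvu ▸ hv, fun hu => ?_⟩
      obtain ⟨v, hv, rfl⟩ := Finset.mem_image.1 (hts hu)
      exact ⟨v, ⟨hv, hu⟩, rfl⟩

lemma image_isSubcomplex {L : SComplex W} (hf : ∀ σ ∈ K.faces, σ.image f ∈ L.faces) :
    (K.image f).IsSubcomplex L := by
  rintro _ ⟨σ, hσ, rfl⟩
  exact hf σ hσ

lemma vertexSet_image_subset : (K.image f).vertexSet ⊆ f '' K.vertexSet := by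
  rintro u ⟨σ, hσ, hu⟩
  obtain ⟨v, hv, rfl⟩ := Finset.mem_image.1 (hu ▸ Finset.mem_singleton_self u)
  exact ⟨v, K.down_closed hσ (Finset.singleton_subset_iff.2 hv) (Finset.singleton_nonempty v), rfl⟩

lemma IsConic.exists_insert_image_mem {K : SComplex W} {r : ℤ} (hK : K.IsConic r)
    {D : SComplex V} (hf : ∀ σ ∈ D.faces, σ.image f ∈ K.faces) (hfin : D.vertexSet.Finite)
    (hcard : (D.vertexSet.ncard : ℤ) ≤ r) :
    ∃ u ∈ K.vertexSet, ∀ σ ∈ D.faces, insert u (σ.image f) ∈ K.faces := by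
  have hsub : (D.image f).vertexSet ⊆ f '' D.vertexSet := vertexSet_image_subset
  have hle : (D.image f).vertexSet.ncard ≤ D.vertexSet.ncard :=
    (Set.ncard_le_ncard hsub (hfin.image f)).trans (Set.ncard_image_le hfin)
  obtain ⟨u, hu, hstar⟩ := hK (D.image f) (image_isSubcomplex hf) ((hfin.image f).subset hsub)
    (le_trans (by exact_mod_cast hle) hcard)
  exact ⟨u, hu, fun σ hσ => hstar _ ⟨σ, hσ, rfl⟩⟩

end SComplex

section Pushforward

open SComplex

variable {K : SComplex V} {f : V → W} {x : V → ℝ} {σ : Finset V}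

lemma pushforward_eq_sum (hσ : ∀ v, x v ≠ 0 → v ∈ σ) (u : W) :
    pushforward f x u = ∑ v ∈ σ with f v = u, x v := by
  refine finsum_mem_eq_sum_of_inter_support_eq _ (Set.ext fun v => ?_)
  simp only [Set.mem_inter_iff, Set.mem_preimage, Set.mem_singleton_iff, Function.mem_support,
    Finset.coe_filter, Set.mem_ofPred_eq]
  exact ⟨fun ⟨h1, h2⟩ => ⟨⟨hσ v h2, h1⟩, h2⟩, fun ⟨⟨_, h1⟩, h2⟩ => ⟨h1, h2⟩⟩

lemma pushforward_mem_geomSimplex (hx : x ∈ K.geomSimplex σ) :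
    pushforward f x ∈ (K.image f).geomSimplex (σ.image f) := by
  have hσ : ∀ v, x v ≠ 0 → v ∈ σ := fun v hv => by_contra fun h => hv (hx.2 v h)
  obtain ⟨s, hs, hxs⟩ := exists_support hx.1
  have hsσ : s ⊆ σ := fun v hv => hσ v ((hxs v).1 hv)
  have hzero : ∀ u, u ∉ s.image f → pushforward f x u = 0 := fun u hu => by
    rw [pushforward_eq_sum (fun v => (hxs v).2) u]
    refine Finset.sum_eq_zero fun v hv => ?_
    obtain ⟨hvs, rfl⟩ := Finset.mem_filter.1 hv
    exact absurd (Finset.mem_image_of_mem f hvs) hu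
  refine ⟨⟨s.image f, ⟨s, hs, rfl⟩, fun u => ?_, hzero, ?_⟩, fun u hu => hzero u fun h =>
    hu (Finset.image_subset_image hsσ h)⟩
  · rw [pushforward_eq_sum (fun v => (hxs v).2) u]
    exact Finset.sum_nonneg fun v _ => coord_nonneg hx.1 v
  · simp_rw [pushforward_eq_sum (fun v => (hxs v).2)]
    rw [Finset.sum_fiberwise_of_maps_to fun v hv => Finset.mem_image_of_mem f hv]
    exact sum_eq_one_of_support_subset hx.1 fun v => (hxs v).2

lemma pushforward_mem_realization (hx : x ∈ K.realization) :
    pushforward f x ∈ (K.image f).realization := by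
  obtain ⟨σ, -, -, hσ, -⟩ := id hx
  exact (pushforward_mem_geomSimplex ⟨hx, hσ⟩).1

lemma pushforward_add {y : V → ℝ} (hx : (Function.support x).Finite)
    (hy : (Function.support y).Finite) :
    pushforward f (x + y) = pushforward f x + pushforward f y :=
  funext fun _ => finsum_mem_add_distrib' (hx.subset Set.inter_subset_right)
    (hy.subset Set.inter_subset_right)

lemma pushforward_smul (c : ℝ) : pushforward f (c • x) = c • pushforward f x :=
  funext fun _ => (mul_finsum_mem _ c).symm

lemma pushforward_single (a : V) : pushforward f (Pi.single a 1) = Pi.single (f a) 1 := by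
  funext u
  rw [pushforward_eq_sum (σ := {a}) fun v hv => by
    by_contra h; exact hv (Pi.single_eq_of_ne (Finset.notMem_singleton.1 h) _)]
  rw [Finset.filter_singleton]
  rcases eq_or_ne (f a) u with rfl | h
  · simp
  · simp [h]

lemma pushforward_update_of_apply_eq_zero [DecidableEq V] {a : V} {b : W} (ha : x a = 0) :
    pushforward (Function.update f a b) x = pushforward f x := by
  funext u
  unfold pushforward
  rw [← finsum_mem_inter_support x, ← finsum_mem_inter_support x (f ⁻¹' {u})]
  congr! 2 with v
  simp only [Set.mem_inter_iff, Set.mem_preimage, Set.mem_singleton_iff, Function.mem_support]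
  rcases eq_or_ne v a with rfl | hv
  · simp [ha]
  · rw [Function.update_of_ne hv]

lemma pushforward_smul_single_add_smul {a : V} {t c : ℝ} {z : V → ℝ}
    (hz : (Function.support z).Finite) :
    pushforward f (t • Pi.single a 1 + c • z) = t • Pi.single (f a) 1 + c • pushforward f z := by
  have h₁ : (Function.support (t • Pi.single a (1 : ℝ))).Finite :=
    (Set.finite_singleton a).subset ((Function.support_const_smul_subset t _).trans
      Pi.support_single_subset)
  rw [pushforward_add h₁ (hz.subset (Function.support_const_smul_subset c z)), pushforward_smul,
    pushforward_smul, pushforward_single]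

lemma pushforward_bounds (hx : x ∈ K.realization) (S : Finset V) (u : W) :
    ∑ v ∈ S with f v = u, x v ≤ pushforward f x u ∧
      pushforward f x u ≤ ∑ v ∈ S with f v = u, x v + (1 - ∑ v ∈ S, x v) := by
  obtain ⟨σ, -, hσ⟩ := exists_support hx
  have hT : ∀ v, x v ≠ 0 → v ∈ S ∪ σ := fun v hv => Finset.mem_union_right _ ((hσ v).2 hv)
  rw [pushforward_eq_sum hT u]
  have hsplit := Finset.sum_sdiff (f := x)
    (Finset.filter_subset_filter (f · = u) (Finset.subset_union_left (s₁ := S) (s₂ := σ)))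
  have htotal := Finset.sum_sdiff (f := x) (Finset.subset_union_left (s₁ := S) (s₂ := σ))
  rw [sum_eq_one_of_support_subset hx hT] at htotal
  have hle : ∑ v ∈ (S ∪ σ).filter (f · = u) \ S.filter (f · = u), x v ≤ ∑ v ∈ (S ∪ σ) \ S, x v :=
    Finset.sum_le_sum_of_subset_of_nonneg
      (fun v hv => by
        rw [Finset.mem_sdiff, Finset.mem_filter, Finset.mem_filter] at hv
        exact Finset.mem_sdiff.2 ⟨hv.1.1, fun h => hv.2 ⟨h, hv.1.2⟩⟩)
      fun v _ _ => coord_nonneg hx v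
  have hnn : 0 ≤ ∑ v ∈ (S ∪ σ).filter (f · = u) \ S.filter (f · = u), x v :=
    Finset.sum_nonneg fun v _ => coord_nonneg hx v
  constructor <;> linarith

open Filter Topology in
theorem continuous_pushforward (K : SComplex V) (f : V → W) :
    Continuous fun x : K.space => pushforward f (x : V → ℝ) := by
  refine continuous_pi fun u => continuous_iff_continuousAt.2 fun x₀ => ?_
  obtain ⟨S, -, hS⟩ := exists_support x₀.2
  have hsum : ∀ T : Finset V, Continuous fun x : K.space => ∑ v ∈ T, (x : V → ℝ) v := fun T =>
    continuous_finsetSum T fun v _ => (continuous_apply v).comp continuous_subtype_val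
  have hx₀ := pushforward_eq_sum (f := f) (fun v => (hS v).2) u
  have hlower : Tendsto (fun x : K.space => ∑ v ∈ S with f v = u, (x : V → ℝ) v) (𝓝 x₀)
      (𝓝 (pushforward f x₀ u)) := by
    rw [hx₀]
    exact (hsum _).tendsto x₀
  have hupper : Tendsto (fun x : K.space =>
      ∑ v ∈ S with f v = u, (x : V → ℝ) v + (1 - ∑ v ∈ S, (x : V → ℝ) v)) (𝓝 x₀)
      (𝓝 (pushforward f x₀ u)) := by
    convert ((hsum {v ∈ S | f v = u}).add
      ((continuous_const (y := (1 : ℝ))).sub (hsum S))).tendsto x₀ using 2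
    · rfl
    · rw [Pi.add_apply, Pi.sub_apply, sum_eq_one_of_support_subset x₀.2 fun v => (hS v).2,
        sub_self, add_zero, hx₀]
  exact tendsto_of_tendsto_of_tendsto_of_le_of_le hlower hupper
    (fun x => (pushforward_bounds x.2 S u).1) fun x => (pushforward_bounds x.2 S u).2

end Pushforward

open Filter Topology in
theorem ContinuousOn.smul_of_norm_le_one {X E : Type*} [TopologicalSpace X]
    [NormedAddCommGroup E] [NormedSpace ℝ E] {s : Set X} {c : X → ℝ} {g : X → E}
    (hc : ContinuousOn c s) (hg : ContinuousOn g {x ∈ s | c x ≠ 0})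
    (hg1 : ∀ x ∈ s, ‖g x‖ ≤ 1) : ContinuousOn (fun x => c x • g x) s := by
  intro x hx
  by_cases h : c x = 0
  · have hc0 : Tendsto c (𝓝[s] x) (𝓝 0) := h ▸ hc x hx
    rw [ContinuousWithinAt, h, zero_smul]
    exact hc0.zero_smul_isBoundedUnder_le
      (isBoundedUnder_of_eventually_le (eventually_nhdsWithin_of_forall hg1))
  · have hmem : {y | c y ≠ 0} ∈ 𝓝[s] x :=
      (hc x hx).preimage_mem_nhdsWithin (isOpen_ne.mem_nhds h)
    rw [← continuousWithinAt_inter' hmem]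
    exact ((hc x hx).mono Set.inter_subset_left).smul (hg x ⟨hx, h⟩)

section Ball

variable {E : Type*} [NormedAddCommGroup E]

namespace SComplex

variable {D : SComplex V} (e : D.space ≃ₜ Metric.closedBall (0 : E) 1) {x : V → ℝ}

noncomputable def ballCoord (x : V → ℝ) : E :=
  if h : x ∈ D.realization then e ⟨x, h⟩ else 0

lemma ballCoord_of_mem (hx : x ∈ D.realization) : ballCoord e x = e ⟨x, hx⟩ := dif_pos hx

lemma norm_ballCoord_le (x : V → ℝ) : ‖ballCoord e x‖ ≤ 1 := by
  unfold ballCoord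
  split_ifs with h
  · exact mem_closedBall_zero_iff.1 (e ⟨x, h⟩).2
  · simp

lemma continuousOn_ballCoord : ContinuousOn (ballCoord e) D.realization := by
  rw [continuousOn_iff_continuous_domRestrict]
  convert continuous_subtype_val.comp e.continuous using 1
  exact funext fun x => ballCoord_of_mem e x.2

end SComplex

variable [NormedSpace ℝ E]

noncomputable def unitBallRetraction (b : E) : Metric.closedBall (0 : E) 1 :=
  ⟨(max 1 ‖b‖)⁻¹ • b, by
    have h : 0 < max 1 ‖b‖ := zero_lt_one.trans_le (le_max_left _ _)
    rw [mem_closedBall_zero_iff, norm_smul, norm_inv, Real.norm_of_nonneg h.le,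
      inv_mul_le_iff₀ h, mul_one]
    exact le_max_right _ _⟩

lemma continuous_unitBallRetraction : Continuous (unitBallRetraction (E := E)) :=
  (((continuous_const.max continuous_norm).inv₀ fun _ =>
    (zero_lt_one.trans_le (le_max_left _ _)).ne').smul continuous_id).subtype_mk _

lemma coe_unitBallRetraction {b : E} (hb : ‖b‖ ≤ 1) : (unitBallRetraction b : E) = b := by
  simp [unitBallRetraction, max_eq_left hb]

namespace SComplex

variable {D : SComplex V} (e : D.space ≃ₜ Metric.closedBall (0 : E) 1) {x : V → ℝ} {b : E}

noncomputable def ballPoint (b : E) : D.space := e.symm (unitBallRetraction b)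

lemma ballCoord_ballPoint (hb : ‖b‖ ≤ 1) : ballCoord e (ballPoint e b) = b := by
  rw [ballCoord_of_mem e (ballPoint e b).2, Subtype.coe_eta, ballPoint,
    Homeomorph.apply_symm_apply, coe_unitBallRetraction hb]

lemma ballPoint_ballCoord (hx : x ∈ D.realization) :
    (ballPoint e (ballCoord e x) : V → ℝ) = x := by
  have hb : unitBallRetraction (e ⟨x, hx⟩ : E) = e ⟨x, hx⟩ :=
    Subtype.ext (coe_unitBallRetraction (mem_closedBall_zero_iff.1 (e ⟨x, hx⟩).2))
  rw [ballPoint, ballCoord_of_mem e hx, hb, Homeomorph.symm_apply_apply]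

lemma continuous_ballPoint : Continuous (ballPoint e) :=
  e.symm.continuous.comp continuous_unitBallRetraction

end SComplex

end Ball

section Homotopy

variable {X Y : Type*} [TopologicalSpace X] [TopologicalSpace Y] {K : SComplex W}
  {f g k : X → W → ℝ}

lemma ambientHomotopic_iff : AmbientHomotopic K f g ↔ ∃ F G : C(X, K.space),
    (∀ x, (F x : W → ℝ) = f x) ∧ (∀ x, (G x : W → ℝ) = g x) ∧ F.Homotopic G := by
  constructor
  · rintro ⟨H, h0, h1⟩
    exact ⟨H.comp ⟨(·, 0), by fun_prop⟩, H.comp ⟨(·, 1), by fun_prop⟩, h0, h1,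
      ⟨{ toContinuousMap := H.comp ContinuousMap.prodSwap
         map_zero_left := fun _ => rfl
         map_one_left := fun _ => rfl }⟩⟩
  · rintro ⟨F, G, hF, hG, ⟨Φ⟩⟩
    exact ⟨Φ.toContinuousMap.comp ContinuousMap.prodSwap, fun x => by simp [hF],
      fun x => by simp [hG]⟩

lemma AmbientHomotopic.symm (h : AmbientHomotopic K f g) : AmbientHomotopic K g f := by
  obtain ⟨F, G, hF, hG, hFG⟩ := ambientHomotopic_iff.1 h
  exact ambientHomotopic_iff.2 ⟨G, F, hG, hF, hFG.symm⟩

lemma AmbientHomotopic.trans (h₁ : AmbientHomotopic K f g) (h₂ : AmbientHomotopic K g k) :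
    AmbientHomotopic K f k := by
  obtain ⟨F₁, G₁, hF₁, hG₁, h₁⟩ := ambientHomotopic_iff.1 h₁
  obtain ⟨F₂, G₂, hF₂, hG₂, h₂⟩ := ambientHomotopic_iff.1 h₂
  have : G₁ = F₂ := ContinuousMap.ext fun x => Subtype.ext ((hG₁ x).trans (hF₂ x).symm)
  exact ambientHomotopic_iff.2 ⟨F₁, G₂, hF₁, hG₂, h₁.trans (this ▸ h₂)⟩

lemma AmbientHomotopic.comp_continuous (h : AmbientHomotopic K f g) {c : Y → X}
    (hc : Continuous c) : AmbientHomotopic K (f ∘ c) (g ∘ c) := by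
  obtain ⟨H, h0, h1⟩ := h
  exact ⟨H.comp ⟨fun p => (c p.1, p.2), by fun_prop⟩, fun y => h0 (c y), fun y => h1 (c y)⟩

lemma AmbientHomotopic.ambientNullhomotopic_iff {f : Y → W → ℝ} (h : X ≃ₜ Y)
    (hfg : AmbientHomotopic K (f ∘ h) g) :
    AmbientNullhomotopic K f ↔ AmbientNullhomotopic K g := by
  constructor
  · rintro ⟨c, hc⟩
    exact ⟨c, hfg.symm.trans (hc.comp_continuous h.continuous)⟩
  · rintro ⟨c, hc⟩
    have := (hfg.trans hc).comp_continuous h.symm.continuous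
    rw [Function.comp_assoc, h.self_comp_symm, Function.comp_id] at this
    exact ⟨c, this⟩

end Homotopy

namespace SComplex

/-- The data of `IsStarringAt` apart from the size bound, with the disk `D` parametrized by
the closed unit ball of `E` so that `bD` corresponds to the unit sphere. -/
structure Starring (M Mt : SComplex V) (E : Type*) [NormedAddCommGroup E] where
  D : SComplex V
  bD : SComplex V
  w : V
  D_isSubcomplex : D.IsSubcomplex M
  bD_isSubcomplex : bD.IsSubcomplex D
  w_not_mem : w ∉ M.vertexSet
  faces_eq : Mt.faces = (M.faces \ {τ | τ ∈ D.faces ∧ τ ∉ bD.faces}) ∪ coneFaces w bD.faces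
  e : D.space ≃ₜ Metric.closedBall (0 : E) 1
  mem_bD_iff : ∀ x : D.space, (x : V → ℝ) ∈ bD.realization ↔ (e x : E) ∈ Metric.sphere 0 1

end SComplex

namespace SComplex.Starring

variable {M Mt : SComplex V} {E : Type*} [NormedAddCommGroup E] (S : Starring M Mt E)
  {x y : V → ℝ} {σ : Finset V}

lemma w_not_mem_of_mem_faces (hσ : σ ∈ M.faces) : S.w ∉ σ :=
  not_mem_of_not_mem_vertexSet S.w_not_mem hσ

lemma apply_w_eq_zero (hx : x ∈ M.realization) : x S.w = 0 :=
  apply_eq_zero_of_not_mem_vertexSet S.w_not_mem hx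

lemma bD_isSubcomplex_M : S.bD.IsSubcomplex M := fun _ h => S.D_isSubcomplex (S.bD_isSubcomplex h)

lemma mem_faces_iff : σ ∈ Mt.faces ↔
    (σ ∈ M.faces ∧ (σ ∈ S.D.faces → σ ∈ S.bD.faces)) ∨ σ ∈ (cone S.w S.bD).faces := by
  rw [S.faces_eq]
  simp only [Set.mem_union, Set.mem_sdiff, Set.mem_ofPred_eq, not_and, not_not]
  rfl

lemma cone_isSubcomplex : (cone S.w S.bD).IsSubcomplex Mt := fun _ h =>
  S.mem_faces_iff.2 (Or.inr h)

lemma mem_realization_of_apply_w_eq_zero (hy : y ∈ Mt.realization) (h : y S.w = 0) :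
    y ∈ M.realization := by
  obtain ⟨s, hs, hys⟩ := exists_support hy
  refine mem_realization_of_support_subset hy ?_ fun v => (hys v).2
  rcases S.mem_faces_iff.1 hs with ⟨hsM, -⟩ | hsc
  · exact hsM
  · exact S.bD_isSubcomplex_M (mem_of_mem_cone_faces hsc fun hw => (hys _).1 hw h)

lemma mem_cone_of_apply_w_ne_zero (hy : y ∈ Mt.realization) (h : y S.w ≠ 0) :
    y ∈ (cone S.w S.bD).realization := by
  obtain ⟨s, hs, hys⟩ := exists_support hy
  refine mem_realization_of_support_subset hy ?_ fun v => (hys v).2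
  rcases S.mem_faces_iff.1 hs with ⟨hsM, -⟩ | hsc
  · exact absurd ((hys _).2 h) (S.w_not_mem_of_mem_faces hsM)
  · exact hsc

lemma mem_bD_of_mem_D (hy : y ∈ Mt.realization) (hyD : y ∈ S.D.realization) :
    y ∈ S.bD.realization := by
  obtain ⟨s, hs, hys⟩ := exists_support hy
  have hsD := mem_faces_of_support hyD hys
  refine mem_realization_of_support_subset hy ?_ fun v => (hys v).2
  rcases S.mem_faces_iff.1 hs with ⟨-, h⟩ | hsc
  · exact h hsD
  · exact mem_of_mem_cone_faces hsc (S.w_not_mem_of_mem_faces (S.D_isSubcomplex hsD))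

lemma mem_realization_of_not_mem_D (hx : x ∈ M.realization) (hxD : x ∉ S.D.realization) :
    x ∈ Mt.realization := by
  obtain ⟨s, hs, hxs⟩ := exists_support hx
  refine mem_realization_of_support_subset hx (S.mem_faces_iff.2 (Or.inl ⟨hs, fun hsD => ?_⟩))
    fun v => (hxs v).2
  exact absurd (mem_realization_of_support_subset hx hsD fun v => (hxs v).2) hxD

lemma norm_ballCoord_eq_one_iff (hx : x ∈ S.D.realization) :
    ‖ballCoord S.e x‖ = 1 ↔ x ∈ S.bD.realization := by
  rw [ballCoord_of_mem S.e hx, S.mem_bD_iff ⟨x, hx⟩, mem_sphere_zero_iff_norm]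

lemma map_faces_update {K : SComplex W} {f : V → W} {u : W}
    (hfM : ∀ σ ∈ M.faces, σ.image f ∈ K.faces) (hu : u ∈ K.vertexSet)
    (hfbD : ∀ τ ∈ S.bD.faces, insert u (τ.image f) ∈ K.faces) :
    ∀ σ ∈ Mt.faces, σ.image (Function.update f S.w u) ∈ K.faces := by
  have himage : ∀ σ ∈ M.faces, σ.image (Function.update f S.w u) = σ.image f := fun σ hσ =>
    Finset.image_congr fun v hv =>
      Function.update_of_ne (fun (h : v = S.w) => S.w_not_mem_of_mem_faces hσ (h ▸ hv)) _ _
  intro σ hσ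
  rcases S.mem_faces_iff.1 hσ with ⟨hσM, -⟩ | (hσ | ⟨τ, hτ, rfl⟩) | rfl
  · rw [himage σ hσM]
    exact hfM σ hσM
  · rw [himage σ (S.bD_isSubcomplex_M hσ)]
    exact hfM σ (S.bD_isSubcomplex_M hσ)
  · rw [Finset.image_insert, Function.update_self, himage τ (S.bD_isSubcomplex_M hτ)]
    exact hfbD τ hτ
  · rw [Finset.image_singleton, Function.update_self]
    exact hu

variable [NormedSpace ℝ E] {b : E}

/-- Ball coordinates on the cone `w ∂D`: the apex sits at the center, `∂D` on the sphere. -/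
noncomputable def ballToCone (b : E) : V → ℝ :=
  (1 - ‖b‖) • Pi.single S.w 1 + ‖b‖ • (ballPoint S.e (‖b‖⁻¹ • b) : V → ℝ)

noncomputable def coneToDisk (y : V → ℝ) : S.D.space :=
  ballPoint S.e ((1 - y S.w) • ballCoord S.e (coneBase S.w y))

noncomputable def homeoFun (y : V → ℝ) : V → ℝ :=
  if y S.w = 0 then y else S.coneToDisk y

noncomputable def homeoInv (x : V → ℝ) : V → ℝ :=
  if x ∈ S.D.realization then S.ballToCone (ballCoord S.e x) else x

lemma ballPoint_apply_w (b : E) : (ballPoint S.e b : V → ℝ) S.w = 0 :=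
  S.apply_w_eq_zero (realization_mono S.D_isSubcomplex (ballPoint S.e b).2)

lemma ballToCone_apply_w (b : E) : S.ballToCone b S.w = 1 - ‖b‖ := by
  simp [ballToCone, S.ballPoint_apply_w]

lemma ballToCone_of_norm_eq_one (hb : ‖b‖ = 1) : S.ballToCone b = ballPoint S.e b := by
  simp [ballToCone, hb]

lemma ballToCone_mem (hb : ‖b‖ ≤ 1) : S.ballToCone b ∈ Mt.realization := by
  rcases eq_or_ne b 0 with rfl | hb0
  · simpa [ballToCone] using single_mem_realization (S.cone_isSubcomplex (Or.inr rfl))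
  have hz : (ballPoint S.e (‖b‖⁻¹ • b) : V → ℝ) ∈ S.bD.realization := by
    rw [← S.norm_ballCoord_eq_one_iff (ballPoint S.e _).2, ballCoord_ballPoint] <;>
      rw [norm_smul, norm_inv, norm_norm, inv_mul_cancel₀ (norm_ne_zero_iff.2 hb0)]
  obtain ⟨τ, hτ, hzτ⟩ := exists_mem_geomSimplex hz
  have := smul_single_add_smul_mem_realization (S.cone_isSubcomplex (Or.inl (Or.inr ⟨τ, hτ, rfl⟩)))
    hzτ (sub_nonneg.2 hb) (sub_le_self 1 (norm_nonneg b))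
  rwa [sub_sub_cancel] at this

lemma coneToDisk_of_mem_bD (hy : y ∈ S.bD.realization) : (S.coneToDisk y : V → ℝ) = y := by
  have hw := S.apply_w_eq_zero (realization_mono S.bD_isSubcomplex_M hy)
  rw [coneToDisk, coneBase_of_apply_eq_zero hw, hw, sub_zero, one_smul,
    ballPoint_ballCoord _ (realization_mono S.bD_isSubcomplex hy)]

lemma coneToDisk_ballToCone (hb : ‖b‖ ≤ 1) : S.coneToDisk (S.ballToCone b) = ballPoint S.e b := by
  rw [coneToDisk, ballToCone_apply_w, sub_sub_cancel]
  congr 1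
  rcases eq_or_ne b 0 with rfl | hb0
  · simp
  have hb' : ‖b‖ ≠ 0 := norm_ne_zero_iff.2 hb0
  rw [ballToCone, coneBase_smul_single_add_smul (S.ballPoint_apply_w _) hb', ballCoord_ballPoint,
    smul_inv_smul₀ hb']
  rw [norm_smul, norm_inv, norm_norm, inv_mul_cancel₀ hb']

lemma ballToCone_coneToDisk (hy : y ∈ Mt.realization) (h0 : y S.w ≠ 0) :
    S.ballToCone (ballCoord S.e (S.coneToDisk y)) = y := by
  have hy1 := coord_le_one hy S.w
  have hc : ballCoord S.e (S.coneToDisk y) = (1 - y S.w) • ballCoord S.e (coneBase S.w y) := by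
    refine ballCoord_ballPoint _ ?_
    rw [norm_smul, Real.norm_of_nonneg (sub_nonneg.2 hy1)]
    exact mul_le_one₀ (sub_le_self 1 (coord_nonneg hy S.w)) (norm_nonneg _) (norm_ballCoord_le _ _)
  rw [hc]
  rcases eq_or_ne (y S.w) 1 with h1 | h1
  · rw [h1, sub_self, zero_smul, eq_single_of_apply_eq_one hy h1]
    simp [ballToCone]
  have hz := coneBase_mem_realization (S.mem_cone_of_apply_w_ne_zero hy h0) h1
  have hzD := realization_mono S.bD_isSubcomplex hz
  have ht : 0 < 1 - y S.w := sub_pos.2 (lt_of_le_of_ne hy1 h1)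
  rw [ballToCone, norm_smul, (S.norm_ballCoord_eq_one_iff hzD).2 hz, mul_one,
    Real.norm_of_nonneg ht.le, inv_smul_smul₀ ht.ne', ballPoint_ballCoord _ hzD, sub_sub_cancel,
    smul_single_add_smul_coneBase h1]

lemma homeoFun_of_mem_M (hy : y ∈ M.realization) : S.homeoFun y = y :=
  if_pos (S.apply_w_eq_zero hy)

lemma homeoFun_of_mem_cone (hy : y ∈ (cone S.w S.bD).realization) :
    S.homeoFun y = S.coneToDisk y := by
  unfold homeoFun
  split_ifs with h
  · exact (S.coneToDisk_of_mem_bD (mem_realization_of_mem_cone hy h)).symm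
  · rfl

lemma homeoInv_of_mem_Mt (hy : y ∈ Mt.realization) : S.homeoInv y = y := by
  unfold homeoInv
  split_ifs with hyD
  · have hb := (S.norm_ballCoord_eq_one_iff hyD).2 (S.mem_bD_of_mem_D hy hyD)
    rw [S.ballToCone_of_norm_eq_one hb, ballPoint_ballCoord _ hyD]
  · rfl

lemma homeoFun_mem (hy : y ∈ Mt.realization) : S.homeoFun y ∈ M.realization := by
  unfold homeoFun
  split_ifs with h
  · exact S.mem_realization_of_apply_w_eq_zero hy h
  · exact realization_mono S.D_isSubcomplex (S.coneToDisk y).2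

lemma homeoInv_mem (hx : x ∈ M.realization) : S.homeoInv x ∈ Mt.realization := by
  unfold homeoInv
  split_ifs with h
  · exact S.ballToCone_mem (norm_ballCoord_le _ _)
  · exact S.mem_realization_of_not_mem_D hx h

lemma homeoInv_homeoFun (hy : y ∈ Mt.realization) : S.homeoInv (S.homeoFun y) = y := by
  by_cases h0 : y S.w = 0
  · rw [homeoFun, if_pos h0, S.homeoInv_of_mem_Mt hy]
  · rw [homeoFun, if_neg h0, homeoInv, if_pos (S.coneToDisk y).2, S.ballToCone_coneToDisk hy h0]

lemma homeoFun_homeoInv (hx : x ∈ M.realization) : S.homeoFun (S.homeoInv x) = x := by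
  by_cases hxD : x ∈ S.D.realization
  · have hb := norm_ballCoord_le S.e x
    rw [homeoInv, if_pos hxD, homeoFun, S.ballToCone_apply_w]
    split_ifs with h1
    · rw [S.ballToCone_of_norm_eq_one (by linarith), ballPoint_ballCoord _ hxD]
    · rw [S.coneToDisk_ballToCone hb, ballPoint_ballCoord _ hxD]
  · rw [homeoInv, if_neg hxD, S.homeoFun_of_mem_M hx]

lemma continuous_ballToCone : Continuous S.ballToCone := by
  refine ((continuous_const.sub continuous_norm).smul continuous_const).add
    (continuous_pi fun v => continuousOn_univ.1 ?_)
  refine ContinuousOn.smul_of_norm_le_one continuous_norm.continuousOn ?_ fun b _ =>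
    norm_coord_le_one (ballPoint S.e _).2 v
  exact ((continuous_apply v).comp (continuous_subtype_val.comp
    (continuous_ballPoint S.e))).comp_continuousOn
    ((continuousOn_inv₀.comp continuous_norm.continuousOn fun b hb => hb.2).smul continuousOn_id)

lemma continuousOn_coneToDisk :
    ContinuousOn (fun y => (S.coneToDisk y : V → ℝ)) (cone S.w S.bD).realization := by
  refine (continuous_subtype_val.comp (continuous_ballPoint S.e)).comp_continuousOn
    (ContinuousOn.smul_of_norm_le_one (continuous_const.sub (continuous_apply S.w)).continuousOn
      ((continuousOn_ballCoord S.e).comp (continuousOn_coneBase.mono fun y hy h => ?_)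
        fun y hy => ?_)
      fun y _ => norm_ballCoord_le _ _)
  · exact hy.2 (sub_eq_zero.2 h.symm)
  · exact realization_mono S.bD_isSubcomplex
      (coneBase_mem_realization hy.1 fun h => hy.2 (sub_eq_zero.2 h.symm))

lemma continuous_homeoFun : Continuous fun y : Mt.space => S.homeoFun y := by
  have hcover : {y : Mt.space | (y : V → ℝ) ∈ M.realization} ∪
      {y | (y : V → ℝ) ∈ (cone S.w S.bD).realization} = Set.univ :=
    Set.eq_univ_of_forall fun y => (em ((y : V → ℝ) S.w = 0)).imp
      (S.mem_realization_of_apply_w_eq_zero y.2) (S.mem_cone_of_apply_w_ne_zero y.2)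
  refine continuousOn_univ.1 (hcover ▸ ContinuousOn.union_of_isClosed ?_ ?_
    (isClosed_setOf_mem_realization _ _) (isClosed_setOf_mem_realization _ _))
  · exact continuous_subtype_val.continuousOn.congr fun y hy => S.homeoFun_of_mem_M hy
  · exact (S.continuousOn_coneToDisk.comp continuous_subtype_val.continuousOn fun _ hy => hy).congr
      fun y hy => S.homeoFun_of_mem_cone hy

lemma continuous_homeoInv : Continuous fun x : M.space => S.homeoInv x := by
  have hcover : {x : M.space | (x : V → ℝ) ∈ Mt.realization} ∪
      {x | (x : V → ℝ) ∈ S.D.realization} = Set.univ :=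
    Set.eq_univ_of_forall fun x => (em ((x : V → ℝ) ∈ S.D.realization)).symm.imp
      (S.mem_realization_of_not_mem_D x.2) id
  refine continuousOn_univ.1 (hcover ▸ ContinuousOn.union_of_isClosed ?_ ?_
    (isClosed_setOf_mem_realization _ _) (isClosed_setOf_mem_realization _ _))
  · exact continuous_subtype_val.continuousOn.congr fun x hx => S.homeoInv_of_mem_Mt hx
  · exact (S.continuous_ballToCone.comp_continuousOn ((continuousOn_ballCoord S.e).comp
      continuous_subtype_val.continuousOn fun _ hx => hx)).congr fun x hx => if_pos hx

noncomputable def homeo : Mt.space ≃ₜ M.space where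
  toFun y := ⟨S.homeoFun y, S.homeoFun_mem y.2⟩
  invFun x := ⟨S.homeoInv x, S.homeoInv_mem x.2⟩
  left_inv y := Subtype.ext (S.homeoInv_homeoFun y.2)
  right_inv x := Subtype.ext (S.homeoFun_homeoInv x.2)
  continuous_toFun := S.continuous_homeoFun.subtype_mk _
  continuous_invFun := S.continuous_homeoInv.subtype_mk _

variable {K : SComplex W} {f : V → W} {u : W} {s : ℝ}

noncomputable def ballHomotopy (f : V → W) (u : W) (b : E) (m : ℝ) : W → ℝ :=
  m • Pi.single u 1 + (1 - m) • pushforward f (ballPoint S.e ((1 - m)⁻¹ • b) : V → ℝ)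

lemma continuous_ballHomotopy (f : V → W) (u : W) :
    Continuous fun p : E × ℝ => S.ballHomotopy f u p.1 p.2 := by
  refine (continuous_snd.smul continuous_const).add (continuous_pi fun a => continuousOn_univ.1 ?_)
  refine ContinuousOn.smul_of_norm_le_one (continuous_const.sub continuous_snd).continuousOn ?_
    fun p _ => norm_coord_le_one (pushforward_mem_realization (ballPoint S.e _).2) a
  exact ((continuous_apply a).comp ((continuous_pushforward S.D f).comp
    (continuous_ballPoint S.e))).comp_continuousOn
    (((continuous_const.sub continuous_snd).continuousOn.inv₀ fun p hp => hp.2).smul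
      continuous_fst.continuousOn)

lemma ballHomotopy_mem (hfD : ∀ σ ∈ S.D.faces, insert u (σ.image f) ∈ K.faces) (b : E)
    {m : ℝ} (hm0 : 0 ≤ m) (hm1 : m ≤ 1) : S.ballHomotopy f u b m ∈ K.realization := by
  obtain ⟨σ, hσ, hz⟩ := exists_mem_geomSimplex (ballPoint S.e ((1 - m)⁻¹ • b)).2
  exact smul_single_add_smul_mem_realization (hfD σ hσ) (pushforward_mem_geomSimplex hz) hm0 hm1

noncomputable def homotopyFun (f : V → W) (u : W) (x : V → ℝ) (s : ℝ) : W → ℝ :=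
  if x ∈ S.D.realization then
    S.ballHomotopy f u (ballCoord S.e x) (min s (1 - ‖ballCoord S.e x‖))
  else pushforward f x

lemma ballHomotopy_zero (hx : x ∈ S.D.realization) :
    S.ballHomotopy f u (ballCoord S.e x) 0 = pushforward f x := by
  simp [ballHomotopy, ballPoint_ballCoord _ hx]

lemma homotopyFun_of_mem_Mt (hx : x ∈ Mt.realization) (hs : 0 ≤ s) :
    S.homotopyFun f u x s = pushforward f x := by
  unfold homotopyFun
  split_ifs with hxD
  · rw [(S.norm_ballCoord_eq_one_iff hxD).2 (S.mem_bD_of_mem_D hx hxD), sub_self, min_eq_right hs,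
      S.ballHomotopy_zero hxD]
  · rfl

lemma homotopyFun_zero (x : V → ℝ) : S.homotopyFun f u x 0 = pushforward f x := by
  unfold homotopyFun
  split_ifs with hxD
  · rw [min_eq_left (sub_nonneg.2 (norm_ballCoord_le _ _)), S.ballHomotopy_zero hxD]
  · rfl

lemma homotopyFun_one (hx : x ∈ M.realization) :
    S.homotopyFun f u x 1 = pushforward (Function.update f S.w u) (S.homeoInv x) := by
  unfold homotopyFun homeoInv
  split_ifs with hxD
  · rw [min_eq_right (sub_le_self 1 (norm_nonneg _)), ballHomotopy, ballToCone, sub_sub_cancel,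
      pushforward_smul_single_add_smul (support_finite (ballPoint S.e _).2),
      Function.update_self, pushforward_update_of_apply_eq_zero (S.ballPoint_apply_w _)]
  · rw [pushforward_update_of_apply_eq_zero (S.apply_w_eq_zero hx)]

lemma continuous_homotopyFun (f : V → W) (u : W) :
    Continuous fun p : M.space × unitInterval => S.homotopyFun f u p.1 p.2 := by
  have hcover : {p : M.space × unitInterval | (p.1 : V → ℝ) ∈ Mt.realization} ∪
      {p | (p.1 : V → ℝ) ∈ S.D.realization} = Set.univ :=
    Set.eq_univ_of_forall fun p => (em ((p.1 : V → ℝ) ∈ S.D.realization)).symm.imp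
      (S.mem_realization_of_not_mem_D p.1.2) id
  have hb : ContinuousOn (fun p : M.space × unitInterval => ballCoord S.e p.1)
      {p | (p.1 : V → ℝ) ∈ S.D.realization} :=
    (continuousOn_ballCoord S.e).comp (continuous_subtype_val.comp continuous_fst).continuousOn
      fun _ hp => hp
  refine continuousOn_univ.1 (hcover ▸ ContinuousOn.union_of_isClosed ?_ ?_
    ((isClosed_setOf_mem_realization _ _).preimage continuous_fst)
    ((isClosed_setOf_mem_realization _ _).preimage continuous_fst))
  · exact ((continuous_pushforward M f).comp continuous_fst).continuousOn.congr fun p hp =>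
      S.homotopyFun_of_mem_Mt hp p.2.2.1
  · exact ((S.continuous_ballHomotopy f u).comp_continuousOn (hb.prodMk
      (continuous_min.comp_continuousOn
        ((continuous_subtype_val.comp continuous_snd).continuousOn.prodMk
          (continuousOn_const.sub hb.norm))))).congr fun p hp => if_pos hp

lemma homotopyFun_mem (hfM : ∀ σ ∈ M.faces, σ.image f ∈ K.faces)
    (hfD : ∀ σ ∈ S.D.faces, insert u (σ.image f) ∈ K.faces) (hx : x ∈ M.realization)
    (hs0 : 0 ≤ s) (hs1 : s ≤ 1) : S.homotopyFun f u x s ∈ K.realization := by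
  unfold homotopyFun
  split_ifs
  · exact S.ballHomotopy_mem hfD _ (le_min hs0 (sub_nonneg.2 (norm_ballCoord_le _ _)))
      ((min_le_left _ _).trans hs1)
  · exact realization_mono (image_isSubcomplex hfM) (pushforward_mem_realization hx)

theorem ambientHomotopic_homeo (hfM : ∀ σ ∈ M.faces, σ.image f ∈ K.faces)
    (hfD : ∀ σ ∈ S.D.faces, insert u (σ.image f) ∈ K.faces) :
    AmbientHomotopic K (fun y : Mt.space => pushforward f (S.homeo y : V → ℝ))
      (fun y : Mt.space => pushforward (Function.update f S.w u) (y : V → ℝ)) := by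
  have hH : AmbientHomotopic K (fun x : M.space => pushforward f (x : V → ℝ))
      (fun x : M.space => pushforward (Function.update f S.w u) (S.homeo.symm x : V → ℝ)) :=
    ⟨⟨fun p => ⟨S.homotopyFun f u p.1 p.2, S.homotopyFun_mem hfM hfD p.1.2 p.2.2.1 p.2.2.2⟩,
      (S.continuous_homotopyFun f u).subtype_mk _⟩,
      fun x => S.homotopyFun_zero x, fun x => S.homotopyFun_one x.2⟩
  simpa [Function.comp_def] using hH.comp_continuous S.homeo.continuous

end SComplex.Starring

end

theorem starring_homotopy_general {V W : Type*} (r : ℤ)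
    (K : SComplex W) (M Mt : SComplex V) (φ : SMap M K)
    (hK : K.IsConic r) (hstar : SComplex.IsStarring r M Mt) :
    ∃ (h : Mt.space ≃ₜ M.space) (φt : SMap Mt K),
      AmbientHomotopic K
        (fun y : Mt.space => pushforward φ.toFun ((h y : M.space) : V → ℝ))
        (fun y : Mt.space => pushforward φt.toFun ((y : Mt.space) : V → ℝ)) ∧
      (AmbientNullhomotopic K
          (fun x : M.space => pushforward φ.toFun ((x : M.space) : V → ℝ)) ↔
        AmbientNullhomotopic K
          (fun y : Mt.space => pushforward φt.toFun ((y : Mt.space) : V → ℝ))) := by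
  obtain ⟨D, bD, d, w, hDM, hfin, hcard, ⟨hbD, e, he⟩, -, hw, hMt⟩ := hstar
  let S : SComplex.Starring M Mt (EuclideanSpace ℝ (Fin d)) := ⟨D, bD, w, hDM, hbD, hw, hMt, e, he⟩
  obtain ⟨u, hu, hfD⟩ := hK.exists_insert_image_mem (fun σ hσ => φ.map_faces σ (hDM hσ)) hfin hcard
  let φt : SMap Mt K :=
    ⟨Function.update φ.toFun w u, S.map_faces_update φ.map_faces hu fun τ hτ => hfD τ (hbD hτ)⟩
  have hH := S.ambientHomotopic_homeo φ.map_faces hfD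
  exact ⟨S.homeo, φt, hH, hH.ambientNullhomotopic_iff S.homeo⟩

/-- Let `K` be `r`-conic, `φ : M → K` simplicial, and let `Mt` be
obtained from `M` by an `r`-starring.  Then there are a homeomorphism
`h : |Mt| → |M|` and a simplicial map `φt : Mt → K` with `|φ| ∘ h ≃ |φt|`; in
particular `|φ|` is null-homotopic iff `|φt|` is null-homotopic. -/
theorem starring_homotopy {V W : Type*} (r : ℤ) (hr : 1 ≤ r)
    (K : SComplex W) (M Mt : SComplex V) (φ : SMap M K)
    (hK : K.IsConic r) (hstar : SComplex.IsStarring r M Mt) :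
    ∃ (h : Mt.space ≃ₜ M.space) (φt : SMap Mt K),
      AmbientHomotopic K
        (fun y : Mt.space => pushforward φ.toFun ((h y : M.space) : V → ℝ))
        (fun y : Mt.space => pushforward φt.toFun ((y : Mt.space) : V → ℝ)) ∧
      (AmbientNullhomotopic K
          (fun x : M.space => pushforward φ.toFun ((x : M.space) : V → ℝ)) ↔
        AmbientNullhomotopic K
          (fun y : Mt.space => pushforward φt.toFun ((y : Mt.space) : V → ℝ))) :=
  starring_homotopy_general r K M Mt φ hK hstar
end
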